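/- arXiv:math/0008206 — 12 statements merged into one kernel-verified Lean document; each statement's English description precedes it below -/
import Mathlib

section
/- Let Γ₁ and Γ₂ be nonempty closed cones in ℝⁿ\{0} such that 0 ∉ Γ₁ + Γ₂. Then the closure of Γ₁ + Γ₂ taken in the subspace ℝⁿ\{0} equals (Γ₁ + Γ₂) ∪ Γ₁ ∪ Γ₂. -/
/-!
Write `x ∈ closure (Γ₁ + Γ₂)`, `x ≠ 0`, as a limit of sums `ξ + η` and rescale each pair by
`(1 + ‖ξ‖ + ‖η‖)⁻¹`. By compactness the rescaled triples `(t, tξ, tη)` accumulate at some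
`(t, ξ, η)` with `ξ + η = t • x`, `t + ‖ξ‖ + ‖η‖ = 1`, `ξ ∈ Γ₁ ∪ {0}`, `η ∈ Γ₂ ∪ {0}`.
If `t = 0` then `ξ = -η ≠ 0` and `0 = ξ + η ∈ Γ₁ + Γ₂`, which is excluded; if `t > 0` then
`x = t⁻¹ξ + t⁻¹η` lies in `(Γ₁ + Γ₂) ∪ Γ₁ ∪ Γ₂`. Conversely `0` is in the closure of every
nonempty cone, so `Γ₁ ⊆ closure (Γ₁ + Γ₂)` and likewise for `Γ₂`.
-/

open Pointwise Filter Topology Set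

theorem subset_closure_add_of_zero_mem_closure {G : Type*} [TopologicalSpace G] [AddMonoid G]
    [ContinuousAdd G] {A B : Set G} (h : 0 ∈ closure B) : A ⊆ closure (A + B) :=
  fun a ha => set_vadd_closure_subset A B (add_zero a ▸ add_mem_add ha h)

theorem add_mem_add_union_of_mem_insert_zero {M : Type*} [AddZeroClass M] {A B : Set M}
    {a b : M} (ha : a ∈ insert 0 A) (hb : b ∈ insert 0 B) (hab : a + b ≠ 0) :
    a + b ∈ A + B ∪ A ∪ B := by
  rcases ha with rfl | ha <;> rcases hb with rfl | hb
  · simp at hab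
  · simpa using Or.inr hb
  · simpa using Or.inl (Or.inr ha)
  · exact Or.inl (Or.inl (add_mem_add ha hb))

section Cone

variable {E : Type*} [NormedAddCommGroup E]

theorem isCompact_setOf_add_norm_add_norm_eq_one [ProperSpace E] {K₁ K₂ : Set E}
    (hK₁ : IsClosed K₁) (hK₂ : IsClosed K₂) :
    IsCompact {p : ℝ × E × E | 0 ≤ p.1 ∧ p.2.1 ∈ K₁ ∧ p.2.2 ∈ K₂ ∧
      p.1 + ‖p.2.1‖ + ‖p.2.2‖ = 1} := by
  refine (isCompact_closedBall (0 : ℝ × E × E) 1).of_isClosed_subset ?_ ?_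
  · refine (isClosed_le continuous_const continuous_fst).inter <|
      (hK₁.preimage (continuous_fst.comp continuous_snd)).inter <|
      (hK₂.preimage (continuous_snd.comp continuous_snd)).inter <| isClosed_eq ?_ continuous_const
    fun_prop
  · rintro ⟨t, ξ, η⟩ ⟨ht, -, -, hnorm⟩
    simp only [Metric.mem_closedBall, dist_zero_right, Prod.norm_def, Real.norm_of_nonneg ht]
    have := norm_nonneg ξ
    have := norm_nonneg η
    refine max_le ?_ (max_le ?_ ?_) <;> linarith

variable [NormedSpace ℝ E] {Γ Γ₁ Γ₂ : Set E}

theorem zero_mem_closure_of_smul_mem (hne : Γ.Nonempty)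
    (hcone : ∀ ξ ∈ Γ, ∀ t : ℝ, 0 < t → t • ξ ∈ Γ) : (0 : E) ∈ closure Γ := by
  obtain ⟨ξ, hξ⟩ := hne
  have hlim : Tendsto (fun t : ℝ => t • ξ) (𝓝[>] 0) (𝓝 0) :=
    ((continuous_id.smul continuous_const).tendsto' 0 0 (zero_smul ℝ ξ)).mono_left
      nhdsWithin_le_nhds
  exact mem_closure_of_tendsto hlim (eventually_mem_nhdsWithin.mono fun t ht => hcone ξ hξ t ht)

theorem smul_mem_insert_zero (hcone : ∀ ξ ∈ Γ, ∀ t : ℝ, 0 < t → t • ξ ∈ Γ) {ξ : E}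
    (hξ : ξ ∈ insert 0 Γ) {t : ℝ} (ht : 0 < t) : t • ξ ∈ insert 0 Γ := by
  rcases hξ with rfl | hξ
  · simp
  · exact mem_insert_of_mem _ (hcone ξ hξ t ht)

theorem exists_pos_le_one_add_norm_smul_eq_one (ξ η : E) :
    ∃ t : ℝ, 0 < t ∧ t ≤ 1 ∧ t + ‖t • ξ‖ + ‖t • η‖ = 1 := by
  have hpos : 0 < 1 + ‖ξ‖ + ‖η‖ := by positivity
  refine ⟨(1 + ‖ξ‖ + ‖η‖)⁻¹, inv_pos.2 hpos, inv_le_one_of_one_le₀ (by linarith [norm_nonneg ξ, norm_nonneg η]), ?_⟩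
  rw [norm_smul, norm_smul, Real.norm_of_nonneg (inv_pos.2 hpos).le]
  field_simp

theorem exists_add_eq_smul_of_mem_closure_add [ProperSpace E]
    (h₁cone : ∀ ξ ∈ Γ₁, ∀ t : ℝ, 0 < t → t • ξ ∈ Γ₁)
    (h₂cone : ∀ ξ ∈ Γ₂, ∀ t : ℝ, 0 < t → t • ξ ∈ Γ₂) {x : E} (hx : x ∈ closure (Γ₁ + Γ₂)) :
    ∃ t : ℝ, 0 ≤ t ∧ ∃ ξ ∈ closure Γ₁, ∃ η ∈ closure Γ₂,
      t + ‖ξ‖ + ‖η‖ = 1 ∧ ξ + η = t • x := by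
  set C := {p : ℝ × E × E | 0 ≤ p.1 ∧ p.2.1 ∈ closure Γ₁ ∧ p.2.2 ∈ closure Γ₂ ∧
    p.1 + ‖p.2.1‖ + ‖p.2.2‖ = 1}
  set g : ℝ × E × E → E := fun p => p.2.1 + p.2.2 - p.1 • x
  have hgC : IsClosed (g '' C) :=
    ((isCompact_setOf_add_norm_add_norm_eq_one isClosed_closure isClosed_closure).image
      (by fun_prop)).isClosed
  suffices h0 : (0 : E) ∈ closure (g '' C) by
    obtain ⟨⟨t, ξ, η⟩, ⟨ht, hξ, hη, hnorm⟩, hg⟩ := hgC.closure_eq ▸ h0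
    exact ⟨t, ht, ξ, hξ, η, hη, hnorm, sub_eq_zero.1 hg⟩
  rw [Metric.mem_closure_iff]
  intro ε hε
  obtain ⟨_, ⟨ξ, hξ, η, hη, rfl⟩, hdist⟩ := Metric.mem_closure_iff.1 hx ε hε
  obtain ⟨t, ht, ht1, hnorm⟩ := exists_pos_le_one_add_norm_smul_eq_one ξ η
  refine ⟨g (t, t • ξ, t • η), mem_image_of_mem g ⟨ht.le, subset_closure (h₁cone ξ hξ t ht),
    subset_closure (h₂cone η hη t ht), hnorm⟩, ?_⟩
  calc dist 0 (g (t, t • ξ, t • η)) = t * dist x (ξ + η) := by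
        rw [dist_zero_left, dist_eq_norm', ← norm_smul_of_nonneg ht.le, smul_sub, smul_add]
    _ ≤ 1 * dist x (ξ + η) := by gcongr
    _ < ε := by rwa [one_mul]

theorem mem_add_union_of_add_eq_smul (h₁cone : ∀ ξ ∈ Γ₁, ∀ t : ℝ, 0 < t → t • ξ ∈ Γ₁)
    (h₂cone : ∀ ξ ∈ Γ₂, ∀ t : ℝ, 0 < t → t • ξ ∈ Γ₂) (hsum : (0 : E) ∉ Γ₁ + Γ₂) {x : E}
    (hx : x ≠ 0) {t : ℝ} (ht : 0 ≤ t) {ξ η : E} (hξ : ξ ∈ insert 0 Γ₁) (hη : η ∈ insert 0 Γ₂)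
    (hnorm : t + ‖ξ‖ + ‖η‖ = 1) (heq : ξ + η = t • x) : x ∈ Γ₁ + Γ₂ ∪ Γ₁ ∪ Γ₂ := by
  rcases ht.eq_or_lt with rfl | ht
  · rw [zero_smul] at heq
    have hξ0 : ξ ≠ 0 := by rintro rfl; simp_all
    have hη0 : η ≠ 0 := by rintro rfl; simp_all
    exact absurd (heq ▸ add_mem_add (hξ.resolve_left hξ0) (hη.resolve_left hη0)) hsum
  · have hx' : x = t⁻¹ • ξ + t⁻¹ • η := by rw [← smul_add, heq, inv_smul_smul₀ ht.ne']
    rw [hx'] at hx ⊢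
    exact add_mem_add_union_of_mem_insert_zero (smul_mem_insert_zero h₁cone hξ (inv_pos.2 ht))
      (smul_mem_insert_zero h₂cone hη (inv_pos.2 ht)) hx

end Cone

/--
Let `Γ₁`, `Γ₂` be nonempty closed cones in `ℝⁿ \ {0}` (subsets of
`ℝⁿ \ {0}` stable under positive scalar multiplication and closed in the subspace
topology of `ℝⁿ \ {0}`) such that `0 ∉ Γ₁ + Γ₂`. Then the closure of `Γ₁ + Γ₂` taken in
the subspace `ℝⁿ \ {0}` equals `(Γ₁ + Γ₂) ∪ Γ₁ ∪ Γ₂`.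
-/
theorem stmt1 (n : ℕ) (Γ₁ Γ₂ : Set (EuclideanSpace ℝ (Fin n)))
    (h₁ne : Γ₁.Nonempty) (h₂ne : Γ₂.Nonempty)
    (h₁0 : (0 : EuclideanSpace ℝ (Fin n)) ∉ Γ₁)
    (h₂0 : (0 : EuclideanSpace ℝ (Fin n)) ∉ Γ₂)
    (h₁cone : ∀ ξ ∈ Γ₁, ∀ t : ℝ, 0 < t → t • ξ ∈ Γ₁)
    (h₂cone : ∀ ξ ∈ Γ₂, ∀ t : ℝ, 0 < t → t • ξ ∈ Γ₂)
    (h₁closed : closure Γ₁ \ {0} ⊆ Γ₁)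
    (h₂closed : closure Γ₂ \ {0} ⊆ Γ₂)
    (hsum : (0 : EuclideanSpace ℝ (Fin n)) ∉ Γ₁ + Γ₂) :
    closure (Γ₁ + Γ₂) \ {0} = (Γ₁ + Γ₂) ∪ Γ₁ ∪ Γ₂ := by
  refine Subset.antisymm ?_ ?_
  · rintro x ⟨hx, hx0⟩
    obtain ⟨t, ht, ξ, hξ, η, hη, hnorm, heq⟩ :=
      exists_add_eq_smul_of_mem_closure_add h₁cone h₂cone hx
    exact mem_add_union_of_add_eq_smul h₁cone h₂cone hsum hx0 ht
      (sdiff_subset_iff.1 h₁closed hξ) (sdiff_subset_iff.1 h₂closed hη) hnorm heq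
  · have hΓ₁ : Γ₁ ⊆ closure (Γ₁ + Γ₂) :=
      subset_closure_add_of_zero_mem_closure (zero_mem_closure_of_smul_mem h₂ne h₂cone)
    have hΓ₂ : Γ₂ ⊆ closure (Γ₁ + Γ₂) := add_comm Γ₂ Γ₁ ▸
      subset_closure_add_of_zero_mem_closure (zero_mem_closure_of_smul_mem h₁ne h₁cone)
    rintro x hx
    refine ⟨union_subset (union_subset subset_closure hΓ₁) hΓ₂ hx, ?_⟩
    rintro rfl
    exact hx.elim (·.elim hsum h₁0) h₂0
end

section
/- In ℝ³ let Γ₁ = {λ·(−1, t, t²) : 0 ≤ t ≤ 1, λ > 0} and Γ₂ = {λ·(1, t, t²) : 0 ≤ t ≤ 1, λ > 0}. Then: (a) Γ₁ and Γ₂ are closed cones in ℝ³\{0}; (b) the point (0, 2, 0) lies in the closure of Γ₁ + Γ₂ in ℝ³\{0} (indeed n·(−1, 1/n, 1/n²) + n·(1, 1/n, 1/n²) = (0, 2, 2/n) → (0, 2, 0) as n → ∞); (c) (0, 2, 0) ∉ (Γ₁ + Γ₂) ∪ Γ₁ ∪ Γ₂. In particular, the identity 'closure of Γ₁ + Γ₂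 in ℝⁿ\{0} equals (Γ₁ + Γ₂) ∪ Γ₁ ∪ Γ₂' can fail when 0 ∈ Γ₁ + Γ₂. -/
/-!
Each `Γ` is the cone over the compact arc `t ↦ (∓1, t, t²)`, which avoids `0`; together with `0`
it is cut out by closed polynomial conditions in the scale `l = ∓x₀`, hence closed in `ℝ³ \ {0}`.
The sums `n(-1, 1/n, 1/n²) + n(1, 1/n, 1/n²) = (0, 2, 2/n)` converge to `(0, 2, 0)` although both
summands escape to infinity. But in a sum of points of `Γ₁` and `Γ₂` whose last coordinate vanishes
both parameters are `t = 0`, so its middle coordinate vanishes as well.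
-/

open Pointwise Filter Topology

def momentCone (ε : ℝ) : Set (Fin 3 → ℝ) :=
  {x | ∃ t l : ℝ, 0 ≤ t ∧ t ≤ 1 ∧ 0 < l ∧ x = l • ![ε, t, t ^ 2]}

/-- `momentCone ε ∪ {0}`, cut out by closed conditions in terms of the scale `l = x 0 / ε`. -/
def closedMomentCone (ε : ℝ) : Set (Fin 3 → ℝ) :=
  {x | 0 ≤ x 0 / ε ∧ 0 ≤ x 1 ∧ x 1 ≤ x 0 / ε ∧ 0 ≤ x 2 ∧ x 2 ≤ x 0 / ε ∧
    x 2 * (x 0 / ε) = x 1 ^ 2}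

section

variable {ε : ℝ}

theorem smul_mem_momentCone {x : Fin 3 → ℝ} (hx : x ∈ momentCone ε) {s : ℝ} (hs : 0 < s) :
    s • x ∈ momentCone ε := by
  obtain ⟨t, l, ht₀, ht₁, hl, rfl⟩ := hx
  exact ⟨t, s * l, ht₀, ht₁, mul_pos hs hl, smul_smul s l _⟩

theorem apply_zero_ne_zero_of_mem_momentCone (hε : ε ≠ 0) {x : Fin 3 → ℝ}
    (hx : x ∈ momentCone ε) : x 0 ≠ 0 := by
  obtain ⟨t, l, -, -, hl, rfl⟩ := hx
  simpa using And.intro hl.ne' hε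

theorem zero_notMem_momentCone (hε : ε ≠ 0) : (0 : Fin 3 → ℝ) ∉ momentCone ε :=
  fun h ↦ apply_zero_ne_zero_of_mem_momentCone hε h rfl

theorem isClosed_closedMomentCone : IsClosed (closedMomentCone ε) := by
  simp only [closedMomentCone, Set.ofPred_and]
  apply_rules [IsClosed.inter, isClosed_le, isClosed_eq] <;> fun_prop

theorem momentCone_subset_closedMomentCone (hε : ε ≠ 0) :
    momentCone ε ⊆ closedMomentCone ε := by
  rintro x ⟨t, l, ht₀, ht₁, hl, rfl⟩
  have hL : l * ε / ε = l := mul_div_cancel_right₀ l hε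
  simp only [closedMomentCone, Set.mem_ofPred_eq, Pi.smul_apply, smul_eq_mul,
    Matrix.cons_val_zero, Matrix.cons_val_one, Matrix.cons_val_two, Matrix.head_cons,
    Matrix.tail_cons, hL]
  refine ⟨hl.le, by positivity, by nlinarith, by positivity,
    by nlinarith [pow_le_one₀ ht₀ ht₁ (n := 2)], by ring⟩

theorem closedMomentCone_diff_zero_subset (hε : ε ≠ 0) :
    closedMomentCone ε \ {0} ⊆ momentCone ε := by
  rintro x ⟨⟨hL₀, h₁₀, h₁L, h₂₀, h₂L, hq⟩, hx₀⟩
  set L := x 0 / ε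
  have hLpos : 0 < L := by
    refine hL₀.lt_of_ne fun hL0 ↦ hx₀ ?_
    have h₀ : x 0 = 0 := by simpa [L, hε] using hL0.symm
    ext i; fin_cases i <;> simp <;> linarith
  refine ⟨x 1 / L, L, by positivity, (div_le_one hLpos).2 h₁L, hLpos, ?_⟩
  ext i; fin_cases i <;> simp
  · exact (div_mul_cancel₀ _ hε).symm
  · field_simp
  · field_simp; linarith

theorem closure_momentCone_diff_zero_subset (hε : ε ≠ 0) :
    closure (momentCone ε) \ {0} ⊆ momentCone ε :=
  (Set.sdiff_subset_sdiff_left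
      (closure_minimal (momentCone_subset_closedMomentCone hε) isClosed_closedMomentCone)).trans
    (closedMomentCone_diff_zero_subset hε)

theorem zero_mem_momentCone_neg_add : (0 : Fin 3 → ℝ) ∈ momentCone (-ε) + momentCone ε :=
  ⟨_, ⟨0, 1, le_rfl, zero_le_one, one_pos, rfl⟩, _, ⟨0, 1, le_rfl, zero_le_one, one_pos, rfl⟩,
    by ext i; fin_cases i <;> simp⟩

/-- Summing the two rays through `(∓ε, t, t²)`, both scaled by `1 / t`. -/
theorem mem_momentCone_neg_add {t : ℝ} (ht₀ : 0 < t) (ht₁ : t ≤ 1) :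
    ![0, 2, 2 * t] ∈ momentCone (-ε) + momentCone ε :=
  ⟨_, ⟨t, 1 / t, ht₀.le, ht₁, by positivity, rfl⟩, _, ⟨t, 1 / t, ht₀.le, ht₁, by positivity, rfl⟩,
    by ext i; fin_cases i <;> simp <;> field_simp <;> ring⟩

theorem mem_closure_momentCone_neg_add : ![0, 2, 0] ∈ closure (momentCone (-ε) + momentCone ε) := by
  have hlim : Tendsto (fun t : ℝ ↦ ![0, 2, 2 * t]) (𝓝[>] 0) (𝓝 ![0, 2, 0]) := by
    have hcont : Continuous fun t : ℝ ↦ ![0, 2, 2 * t] := by fun_prop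
    simpa using hcont.tendsto 0 |>.mono_left nhdsWithin_le_nhds
  refine mem_closure_of_tendsto hlim ?_
  filter_upwards [Ioc_mem_nhdsGT one_pos] with t ht using mem_momentCone_neg_add ht.1 ht.2

theorem apply_one_eq_zero_of_mem_add {a b : ℝ} {x : Fin 3 → ℝ}
    (hx : x ∈ momentCone a + momentCone b) (h₂ : x 2 = 0) : x 1 = 0 := by
  obtain ⟨_, ⟨t, l, ht₀, -, hl, rfl⟩, _, ⟨u, m, hu₀, -, hm, rfl⟩, rfl⟩ := hx
  simp only [Pi.add_apply, Pi.smul_apply, smul_eq_mul, Matrix.cons_val_one,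
    Matrix.cons_val_two, Matrix.head_cons, Matrix.tail_cons] at h₂ ⊢
  -- both summands `l t²`, `m u²` of the last coordinate are nonnegative, so `t = u = 0`
  obtain ⟨ht, hu⟩ := (add_eq_zero_iff_of_nonneg (by positivity) (by positivity)).1 h₂
  simp only [mul_eq_zero, hl.ne', hm.ne', false_or, pow_eq_zero_iff two_ne_zero] at ht hu
  simp [ht, hu]

end

/--
In `ℝ³` let `Γ₁ = {λ•(−1,t,t²) : 0 ≤ t ≤ 1, λ > 0}` and
`Γ₂ = {λ•(1,t,t²) : 0 ≤ t ≤ 1, λ > 0}`. Then (a) `Γ₁`, `Γ₂` are closed cones in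
`ℝ³ \ {0}`; (b) `(0,2,0)` lies in the closure of `Γ₁ + Γ₂` in `ℝ³ \ {0}`;
(c) `(0,2,0) ∉ (Γ₁ + Γ₂) ∪ Γ₁ ∪ Γ₂`. In particular, the identity
"closure of `Γ₁ + Γ₂` in `ℝⁿ \ {0}` equals `(Γ₁ + Γ₂) ∪ Γ₁ ∪ Γ₂`" can fail when
`0 ∈ Γ₁ + Γ₂`.
-/
theorem stmt3
    (Γ₁ Γ₂ : Set (Fin 3 → ℝ))
    (hΓ₁ : Γ₁ = {x | ∃ t l : ℝ, 0 ≤ t ∧ t ≤ 1 ∧ 0 < l ∧ x = l • ![(-1 : ℝ), t, t ^ 2]})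
    (hΓ₂ : Γ₂ = {x | ∃ t l : ℝ, 0 ≤ t ∧ t ≤ 1 ∧ 0 < l ∧ x = l • ![(1 : ℝ), t, t ^ 2]}) :
    -- (a) Γ₁ and Γ₂ are closed cones in ℝ³ \ {0}:
    ((0 : Fin 3 → ℝ) ∉ Γ₁ ∧ (0 : Fin 3 → ℝ) ∉ Γ₂ ∧
      (∀ ξ ∈ Γ₁, ∀ s : ℝ, 0 < s → s • ξ ∈ Γ₁) ∧
      (∀ ξ ∈ Γ₂, ∀ s : ℝ, 0 < s → s • ξ ∈ Γ₂) ∧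
      closure Γ₁ \ {0} ⊆ Γ₁ ∧ closure Γ₂ \ {0} ⊆ Γ₂) ∧
    -- (b) (0,2,0) lies in the closure of Γ₁ + Γ₂ in ℝ³ \ {0}:
    (![(0 : ℝ), 2, 0] ∈ closure (Γ₁ + Γ₂) \ {0}) ∧
    -- (c) (0,2,0) ∉ (Γ₁ + Γ₂) ∪ Γ₁ ∪ Γ₂, so the closure identity fails:
    (![(0 : ℝ), 2, 0] ∉ (Γ₁ + Γ₂) ∪ Γ₁ ∪ Γ₂) ∧
    (0 : Fin 3 → ℝ) ∈ Γ₁ + Γ₂ ∧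
    closure (Γ₁ + Γ₂) \ {0} ≠ (Γ₁ + Γ₂) ∪ Γ₁ ∪ Γ₂ := by
  replace hΓ₁ : Γ₁ = momentCone (-1) := hΓ₁
  replace hΓ₂ : Γ₂ = momentCone 1 := hΓ₂
  subst hΓ₁ hΓ₂
  have hneg : (-1 : ℝ) ≠ 0 := by norm_num
  have hb : ![(0 : ℝ), 2, 0] ∈ closure (momentCone (-1) + momentCone 1) \ {0} :=
    ⟨mem_closure_momentCone_neg_add, fun h ↦ by simpa using congrFun h 1⟩
  have hc : ![(0 : ℝ), 2, 0] ∉ (momentCone (-1) + momentCone 1) ∪ momentCone (-1) ∪ momentCone 1 := by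
    rintro ((h | h) | h)
    · exact two_ne_zero (apply_one_eq_zero_of_mem_add h rfl)
    · exact apply_zero_ne_zero_of_mem_momentCone hneg h rfl
    · exact apply_zero_ne_zero_of_mem_momentCone one_ne_zero h rfl
  refine ⟨⟨zero_notMem_momentCone hneg, zero_notMem_momentCone one_ne_zero,
      fun _ hξ _ hs ↦ smul_mem_momentCone hξ hs, fun _ hξ _ hs ↦ smul_mem_momentCone hξ hs,
      closure_momentCone_diff_zero_subset hneg, closure_momentCone_diff_zero_subset one_ne_zero⟩,
    hb, hc, zero_mem_momentCone_neg_add, fun h ↦ hc (h ▸ hb)⟩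
end

section
/- In ℝ² let Γ₁ = {(x, 0) : x > 0} and Γ₂ = {(x, 0) : x < 0}. Then Γ₁ and Γ₂ are closed cones in ℝ²\{0}, and for every pair of open cones W₁, W₂ in ℝ²\{0} with Γ₁ ⊆ W₁ and Γ₂ ⊆ W₂ one has W₁ + W₂ = ℝ². In particular, no proper open conic neighborhood W of Γ₁ + Γ₂ admits open conic neighborhoods W₁ ⊇ Γ₁, W₂ ⊇ Γ₂ with W₁ + W₂ ⊆ W. -/
open Pointwise Set Filter Topology

theorem closure_neg_diff_zero_subset {G : Type*} [AddGroup G] [TopologicalSpace G]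
    [ContinuousNeg G] {Γ : Set G}
    (hΓ : closure Γ \ {0} ⊆ Γ) : closure (-Γ) \ {0} ⊆ -Γ := by
  rintro ξ ⟨hξ, hξ0⟩
  refine hΓ ⟨?_, ?_⟩
  · rwa [← neg_closure] at hξ
  · simpa only [mem_singleton_iff, neg_eq_zero] using hξ0

section Cones

variable {E : Type*} [AddCommGroup E] [Module ℝ E]

def IsConic (Γ : Set E) : Prop :=
  ∀ ξ ∈ Γ, ∀ t : ℝ, 0 < t → t • ξ ∈ Γ

theorem IsConic.neg {Γ : Set E} (hΓ : IsConic Γ) : IsConic (-Γ) := fun ξ hξ t ht => by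
  simpa only [Set.mem_neg, smul_neg] using hΓ (-ξ) hξ t ht

variable [TopologicalSpace E]

theorem eventually_add_smul_mem [ContinuousAdd E] [ContinuousSMul ℝ E] {W : Set E}
    (hW : IsOpen W) {w : E} (hw : w ∈ W) (z : E) : ∀ᶠ s in 𝓝 (0 : ℝ), w + s • z ∈ W := by
  have hcont : Continuous fun s : ℝ => w + s • z := by fun_prop
  exact hcont.continuousAt.preimage_mem_nhds (by rwa [zero_smul, add_zero, hW.mem_nhds_iff])

theorem add_eq_univ_of_isConic [ContinuousAdd E] [ContinuousSMul ℝ E] {W₁ W₂ : Set E}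
    (ho₁ : IsOpen W₁) (ho₂ : IsOpen W₂) (hc₁ : IsConic W₁) (hc₂ : IsConic W₂) {v : E}
    (hv₁ : v ∈ W₁) (hv₂ : -v ∈ W₂) : W₁ + W₂ = univ := by
  refine eq_univ_of_forall fun z => ?_
  -- `z = t • (v + s • z) + t • (-v + s • z)` with `t = (2 s)⁻¹`, and both summands lie in the
  -- cones once `s > 0` is small.
  obtain ⟨s, ⟨hs₁, hs₂⟩, hs⟩ :=
    ((((eventually_add_smul_mem ho₁ hv₁ z).and (eventually_add_smul_mem ho₂ hv₂ z)).filter_mono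
      nhdsWithin_le_nhds).and self_mem_nhdsWithin :
        ∀ᶠ s in 𝓝[>] (0 : ℝ), _ ∧ s ∈ Ioi 0).exists
  have hs₀ : 0 < 2 * s := mul_pos two_pos hs
  have hsum : (v + s • z) + (-v + s • z) = (2 * s) • z := by module
  refine ⟨_, hc₁ _ hs₁ _ (inv_pos.2 hs₀), _, hc₂ _ hs₂ _ (inv_pos.2 hs₀), ?_⟩
  change _ + _ = z
  rw [← smul_add, hsum, inv_smul_smul₀ hs₀.ne']

end Cones

theorem isConic_posXAxis : IsConic {p : ℝ × ℝ | 0 < p.1 ∧ p.2 = 0} := by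
  rintro ⟨a, b⟩ ⟨ha, hb⟩ t ht
  exact ⟨mul_pos ht ha, mul_eq_zero_of_right t hb⟩

theorem closure_posXAxis_diff_zero_subset :
    closure {p : ℝ × ℝ | 0 < p.1 ∧ p.2 = 0} \ {0} ⊆ {p : ℝ × ℝ | 0 < p.1 ∧ p.2 = 0} := by
  have hcl : closure {p : ℝ × ℝ | 0 < p.1 ∧ p.2 = 0} ⊆ {p : ℝ × ℝ | 0 ≤ p.1 ∧ p.2 = 0} :=
    closure_minimal (fun p hp => ⟨hp.1.le, hp.2⟩)
      ((isClosed_le continuous_const continuous_fst).inter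
        (isClosed_eq continuous_snd continuous_const))
  rintro p ⟨hp, hp0⟩
  obtain ⟨h₁, h₂⟩ := hcl hp
  exact ⟨h₁.lt_of_ne fun h => hp0 (Prod.ext h.symm h₂), h₂⟩

theorem negXAxis_eq_neg_posXAxis :
    {p : ℝ × ℝ | p.1 < 0 ∧ p.2 = 0} = -{p : ℝ × ℝ | 0 < p.1 ∧ p.2 = 0} := by
  ext p
  simp

/--
In `ℝ²` let `Γ₁ = {(x,0) : x > 0}` and `Γ₂ = {(x,0) : x < 0}`. Then
`Γ₁`, `Γ₂` are closed cones in `ℝ² \ {0}`, and for every pair of open cones `W₁`, `W₂`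
in `ℝ² \ {0}` with `Γ₁ ⊆ W₁`, `Γ₂ ⊆ W₂` one has `W₁ + W₂ = ℝ²`. In particular, no
proper open conic neighborhood `W` of `Γ₁ + Γ₂` admits open conic neighborhoods
`W₁ ⊇ Γ₁`, `W₂ ⊇ Γ₂` with `W₁ + W₂ ⊆ W`.
-/
theorem stmt4
    (Γ₁ Γ₂ : Set (ℝ × ℝ))
    (hΓ₁ : Γ₁ = {p | 0 < p.1 ∧ p.2 = 0})
    (hΓ₂ : Γ₂ = {p | p.1 < 0 ∧ p.2 = 0}) :
    -- Γ₁ and Γ₂ are closed cones in ℝ² \ {0}: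
    ((0 : ℝ × ℝ) ∉ Γ₁ ∧ (0 : ℝ × ℝ) ∉ Γ₂ ∧
      (∀ ξ ∈ Γ₁, ∀ t : ℝ, 0 < t → t • ξ ∈ Γ₁) ∧
      (∀ ξ ∈ Γ₂, ∀ t : ℝ, 0 < t → t • ξ ∈ Γ₂) ∧
      closure Γ₁ \ {0} ⊆ Γ₁ ∧ closure Γ₂ \ {0} ⊆ Γ₂) ∧
    -- every pair of open conic neighborhoods sums up to all of ℝ²:
    (∀ W₁ W₂ : Set (ℝ × ℝ),
      IsOpen W₁ → (0 : ℝ × ℝ) ∉ W₁ → (∀ ξ ∈ W₁, ∀ t : ℝ, 0 < t → t • ξ ∈ W₁) →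
      IsOpen W₂ → (0 : ℝ × ℝ) ∉ W₂ → (∀ ξ ∈ W₂, ∀ t : ℝ, 0 < t → t • ξ ∈ W₂) →
      Γ₁ ⊆ W₁ → Γ₂ ⊆ W₂ → W₁ + W₂ = Set.univ) ∧
    -- in particular, no proper open conic neighborhood W of Γ₁ + Γ₂ admits
    -- open conic neighborhoods W₁ ⊇ Γ₁, W₂ ⊇ Γ₂ with W₁ + W₂ ⊆ W:
    (∀ W : Set (ℝ × ℝ),
      IsOpen W → (0 : ℝ × ℝ) ∉ W → (∀ ξ ∈ W, ∀ t : ℝ, 0 < t → t • ξ ∈ W) →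
      Γ₁ + Γ₂ ⊆ W →
      ¬ ∃ W₁ W₂ : Set (ℝ × ℝ),
        IsOpen W₁ ∧ (0 : ℝ × ℝ) ∉ W₁ ∧ (∀ ξ ∈ W₁, ∀ t : ℝ, 0 < t → t • ξ ∈ W₁) ∧
        IsOpen W₂ ∧ (0 : ℝ × ℝ) ∉ W₂ ∧ (∀ ξ ∈ W₂, ∀ t : ℝ, 0 < t → t • ξ ∈ W₂) ∧
        Γ₁ ⊆ W₁ ∧ Γ₂ ⊆ W₂ ∧ W₁ + W₂ ⊆ W) := by
  have hv₁ : ((1 : ℝ), (0 : ℝ)) ∈ Γ₁ := by simp [hΓ₁]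
  have hv₂ : -((1 : ℝ), (0 : ℝ)) ∈ Γ₂ := by simp [hΓ₂]
  have hsum : ∀ W₁ W₂ : Set (ℝ × ℝ), IsOpen W₁ → IsConic W₁ → IsOpen W₂ → IsConic W₂ →
      Γ₁ ⊆ W₁ → Γ₂ ⊆ W₂ → W₁ + W₂ = univ := fun W₁ W₂ ho₁ hc₁ ho₂ hc₂ hs₁ hs₂ =>
    add_eq_univ_of_isConic ho₁ ho₂ hc₁ hc₂ (hs₁ hv₁) (hs₂ hv₂)
  refine ⟨?_, fun W₁ W₂ ho₁ _ hc₁ ho₂ _ hc₂ => hsum W₁ W₂ ho₁ hc₁ ho₂ hc₂, ?_⟩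
  · rw [negXAxis_eq_neg_posXAxis] at hΓ₂
    subst hΓ₁ hΓ₂
    exact ⟨by simp, by simp, isConic_posXAxis, isConic_posXAxis.neg,
      closure_posXAxis_diff_zero_subset,
      closure_neg_diff_zero_subset closure_posXAxis_diff_zero_subset⟩
  · rintro W - hW0 - - ⟨W₁, W₂, ho₁, -, hc₁, ho₂, -, hc₂, hs₁, hs₂, hW⟩
    exact hW0 (hW (hsum W₁ W₂ ho₁ hc₁ ho₂ hc₂ hs₁ hs₂ ▸ mem_univ 0))
end

section
/- Let Γ be a closed cone in ℝⁿ\{0} and let u : A₀(ℝⁿ) × ℝⁿ → ℂ be such that for each φ ∈ A₀(ℝⁿ) the function x ↦ u(φ, x) is smooth with support contained in one fixed compact set K ⊆ ℝⁿ; write û(φ_ε)(ξ) = ∫ e^{−i x·ξ} u(φ_ε, x) dx. Assume that every η ∈ Γ has an open conic neighborhood Γ(η) ⊆ ℝⁿ\{0} for which there exists N(η) ∈ ℕ such that: for all p ∈ ℕ there is M ∈ ℕ such that for every φ ∈ A_M(ℝⁿ) there are c > 0 and ε₀ > 0 with |û(φ_ε)(ξ)| ≤ c ε^{−N(η)} (1+|ξ|)^{−p}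 for all ξ ∈ Γ(η) and 0 < ε < ε₀. Then there exists a single N ∈ ℕ such that: for all p ∈ ℕ there is M ∈ ℕ such that for every φ ∈ A_M(ℝⁿ) there are c > 0 and ε₀ > 0 with |û(φ_ε)(ξ)| ≤ c ε^{−N} (1+|ξ|)^{−p} for all ξ ∈ Γ and 0 < ε < ε₀. -/
open MeasureTheory RealInnerProductSpace

noncomputable section

local notation "Eu" n => EuclideanSpace ℝ (Fin n)

/-- `A_q(ℝ)`: smooth compactly supported functions with integral one whose moments of
orders `1,…,q` vanish. -/
def Aone (q : ℕ) : Set (ℝ → ℝ) :=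
  {φ | ContDiff ℝ (⊤ : ℕ∞) φ ∧ HasCompactSupport φ ∧ (∫ x : ℝ, φ x) = 1 ∧
    ∀ j : ℕ, 1 ≤ j → j ≤ q → (∫ x : ℝ, x ^ j * φ x) = 0}

/-- the `n`-fold tensor power `φ ⊗ … ⊗ φ` of a function on `ℝ`. -/
def tensPow (n : ℕ) (φ : ℝ → ℝ) : (Eu n) → ℝ := fun x => ∏ i, φ (x i)

/-- `A_q(ℝⁿ)`: `n`-fold tensor powers of elements of `A_q(ℝ)`. -/
def Aset (n q : ℕ) : Set ((Eu n) → ℝ) := {Φ | ∃ φ ∈ Aone q, Φ = tensPow n φ}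

/-- the scaled test function `φ_ε(x) = ε^{-n} φ(x/ε)`. -/
def scal (n : ℕ) (Φ : (Eu n) → ℝ) (ε : ℝ) : (Eu n) → ℝ :=
  fun x => (ε ^ n)⁻¹ * Φ (ε⁻¹ • x)

/-- the Fourier transform `û(ξ) = ∫ e^{-i x·ξ} u(x) dx` on `ℝⁿ`. -/
def FTfull (n : ℕ) (f : (Eu n) → ℂ) (ξ : Eu n) : ℂ :=
  ∫ x : Eu n, Complex.exp (-Complex.I * (⟪x, ξ⟫ : ℝ)) * f x

/-- an open cone in `ℝⁿ \ {0}`. -/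
def IsOpenCone (n : ℕ) (Γ : Set (Eu n)) : Prop :=
  IsOpen Γ ∧ (0 : Eu n) ∉ Γ ∧ ∀ ξ ∈ Γ, ∀ t : ℝ, 0 < t → t • ξ ∈ Γ

lemma Aset_mono (n : ℕ) {q q' : ℕ} (h : q' ≤ q) : Aset n q ⊆ Aset n q' := by
  rintro Φ ⟨φ, ⟨h1, h2, h3, h4⟩, rfl⟩
  exact ⟨φ, ⟨h1, h2, h3, fun j hj hjq => h4 j hj (hjq.trans h)⟩, rfl⟩

/--
Let `Γ` be a closed cone in `ℝⁿ \ {0}` and let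
`u : A₀(ℝⁿ) × ℝⁿ → ℂ` be such that each `u(φ,·)` is smooth with support contained in a
fixed compact set `K`. If every `η ∈ Γ` has an open conic neighborhood `Γ(η)` on which
the Fourier transforms `û(φ_ε)` are rapidly decreasing of some order `ε^{-N(η)}`
(in the precise `∀p ∃M ∀φ∈A_M ∃c,ε₀` sense), then one single order `N` works for all of
`Γ`: `∃N ∀p ∃M ∀φ∈A_M ∃c>0 ∃ε₀>0` with
`|û(φ_ε)(ξ)| ≤ c ε^{-N}(1+|ξ|)^{-p}` for all `ξ ∈ Γ`, `0 < ε < ε₀`.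
-/
theorem stmt5 (n : ℕ) (Γ : Set (Eu n))
    (hΓ0 : (0 : Eu n) ∉ Γ)
    (hΓcone : ∀ ξ ∈ Γ, ∀ t : ℝ, 0 < t → t • ξ ∈ Γ)
    (hΓclosed : closure Γ \ {0} ⊆ Γ)
    (u : ((Eu n) → ℝ) → (Eu n) → ℂ) (K : Set (Eu n)) (hK : IsCompact K)
    (husm : ∀ Φ ∈ Aset n 0, ContDiff ℝ (⊤ : ℕ∞) (u Φ))
    (husupp : ∀ Φ ∈ Aset n 0, ∀ x ∉ K, u Φ x = 0)
    (hyp : ∀ η ∈ Γ, ∃ Γη : Set (Eu n), IsOpenCone n Γη ∧ η ∈ Γη ∧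
      ∃ N : ℕ, ∀ p : ℕ, ∃ M : ℕ, ∀ Φ ∈ Aset n M, ∃ c : ℝ, 0 < c ∧ ∃ ε₀ : ℝ, 0 < ε₀ ∧
        ∀ ε : ℝ, 0 < ε → ε < ε₀ → ∀ ξ ∈ Γη,
          ‖FTfull n (u (scal n Φ ε)) ξ‖ ≤ c * ε ^ (-(N : ℤ)) * (1 + ‖ξ‖) ^ (-(p : ℤ))) :
    ∃ N : ℕ, ∀ p : ℕ, ∃ M : ℕ, ∀ Φ ∈ Aset n M, ∃ c : ℝ, 0 < c ∧ ∃ ε₀ : ℝ, 0 < ε₀ ∧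
      ∀ ε : ℝ, 0 < ε → ε < ε₀ → ∀ ξ ∈ Γ,
        ‖FTfull n (u (scal n Φ ε)) ξ‖ ≤ c * ε ^ (-(N : ℤ)) * (1 + ‖ξ‖) ^ (-(p : ℤ)) := by
  classical
  -- choice functions from the hypothesis, indexed by the subtype of `Γ`
  have hyp' : ∀ i : {η : Eu n // η ∈ Γ}, ∃ Γη : Set (Eu n), IsOpenCone n Γη ∧ (i : Eu n) ∈ Γη ∧
      ∃ N : ℕ, ∀ p : ℕ, ∃ M : ℕ, ∀ Φ ∈ Aset n M, ∃ c : ℝ, 0 < c ∧ ∃ ε₀ : ℝ, 0 < ε₀ ∧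
        ∀ ε : ℝ, 0 < ε → ε < ε₀ → ∀ ξ ∈ Γη,
          ‖FTfull n (u (scal n Φ ε)) ξ‖ ≤ c * ε ^ (-(N : ℤ)) * (1 + ‖ξ‖) ^ (-(p : ℤ)) :=
    fun i => hyp i i.2
  choose G hGcone hGmem Nf hNf using hyp'
  choose Mf hMf using fun i => hNf i
  -- the compact set `S = Γ ∩ sphere`
  set S : Set (Eu n) := Γ ∩ Metric.sphere (0 : Eu n) 1 with hS
  have hSclosed : IsClosed S := by
    rw [← closure_subset_iff_isClosed]
    intro x hx
    have hx2 : x ∈ closure Γ ∩ Metric.sphere (0 : Eu n) 1 := by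
      refine ⟨?_, ?_⟩
      · exact closure_mono Set.inter_subset_left hx
      · have := closure_mono (Set.inter_subset_right (s := Γ)) hx
        rwa [(Metric.isClosed_sphere).closure_eq] at this
    have hxne : x ≠ 0 := by
      intro h0
      have : dist x (0 : Eu n) = 1 := hx2.2
      rw [h0] at this; simp at this
    exact ⟨hΓclosed ⟨hx2.1, hxne⟩, hx2.2⟩
  have hScompact : IsCompact S :=
    (isCompact_sphere (0 : Eu n) 1).of_isClosed_subset hSclosed Set.inter_subset_right
  have hcover : S ⊆ ⋃ i : {η : Eu n // η ∈ Γ}, G i := by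
    intro x hx
    exact Set.mem_iUnion.2 ⟨⟨x, hx.1⟩, hGmem ⟨x, hx.1⟩⟩
  obtain ⟨t, ht⟩ := hScompact.elim_finite_subcover G (fun i => (hGcone i).1) hcover
  -- the uniform order
  refine ⟨t.sup fun i => Nf i, ?_⟩
  intro p
  refine ⟨t.sup fun i => Mf i p, ?_⟩
  intro Φ hΦ
  -- for each covering piece obtain constants
  have h' : ∀ i : {η : Eu n // η ∈ Γ}, ∃ c : ℝ, 0 < c ∧ ∃ ε₀ : ℝ, 0 < ε₀ ∧
      (i ∈ t → ∀ ε : ℝ, 0 < ε → ε < ε₀ → ∀ ξ ∈ G i,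
        ‖FTfull n (u (scal n Φ ε)) ξ‖ ≤ c * ε ^ (-(Nf i : ℤ)) * (1 + ‖ξ‖) ^ (-(p : ℤ))) := by
    intro i
    by_cases hi : i ∈ t
    · obtain ⟨c, hc, ε₀, hε₀, hb⟩ :=
        hMf i p Φ (Aset_mono n (Finset.le_sup (f := fun i => Mf i p) hi) hΦ)
      exact ⟨c, hc, ε₀, hε₀, fun _ => hb⟩
    · exact ⟨1, one_pos, 1, one_pos, fun h => absurd h hi⟩
  choose c hc ε₀ hε₀ hb using h'
  have hsum : (0:ℝ) ≤ ∑ i ∈ t, c i := Finset.sum_nonneg fun i _ => (hc i).le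
  refine ⟨1 + ∑ i ∈ t, c i, by linarith, min 1 (∏ i ∈ t, min 1 (ε₀ i)), ?_, ?_⟩
  · exact lt_min one_pos (Finset.prod_pos fun i _ => lt_min one_pos (hε₀ i))
  intro ε hε hεlt ξ hξ
  -- locate `ξ` in one of the covering cones
  have hξne : ξ ≠ 0 := fun h => hΓ0 (h ▸ hξ)
  have hξnorm : (0 : ℝ) < ‖ξ‖ := norm_pos_iff.2 hξne
  have hη : ‖ξ‖⁻¹ • ξ ∈ S := by
    refine ⟨hΓcone ξ hξ _ (inv_pos.2 hξnorm), ?_⟩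
    simp [norm_smul, abs_of_pos (inv_pos.2 hξnorm), inv_mul_cancel₀ hξnorm.ne']
  obtain ⟨i, hit, hiG⟩ := Set.mem_iUnion₂.1 (ht hη)
  have hξG : ξ ∈ G i := by
    have := (hGcone i).2.2 _ hiG ‖ξ‖ hξnorm
    rwa [smul_inv_smul₀ hξnorm.ne'] at this
  -- apply the local estimate
  have hεε₀ : ε < ε₀ i := by
    refine lt_of_lt_of_le hεlt (le_trans (min_le_right _ _) ?_)
    calc ∏ j ∈ t, min 1 (ε₀ j) = min 1 (ε₀ i) * ∏ j ∈ t.erase i, min 1 (ε₀ j) :=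
          (Finset.mul_prod_erase t _ hit).symm
      _ ≤ min 1 (ε₀ i) * 1 := by
          refine mul_le_mul_of_nonneg_left ?_ (le_min zero_le_one (hε₀ i).le)
          exact Finset.prod_le_one (fun j _ => le_min zero_le_one (hε₀ j).le)
            (fun j _ => min_le_left _ _)
      _ = min 1 (ε₀ i) := mul_one _
      _ ≤ ε₀ i := min_le_right _ _
  have key := hb i hit ε hε hεε₀ ξ hξG
  have hε1 : ε ≤ 1 := le_of_lt (lt_of_lt_of_le hεlt (min_le_left _ _))
  have hzpow : ε ^ (-(Nf i : ℤ)) ≤ ε ^ (-((t.sup fun i => Nf i : ℕ) : ℤ)) := by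
    refine zpow_le_zpow_right_of_le_one₀ hε hε1 ?_
    exact neg_le_neg (Int.ofNat_le.2 (Finset.le_sup (f := fun i => Nf i) hit))
  have hci : c i ≤ 1 + ∑ j ∈ t, c j := by
    have h1 : c i ≤ ∑ j ∈ t, c j := Finset.single_le_sum (fun j _ => (hc j).le) hit
    linarith
  have hy : (0 : ℝ) < (1 + ‖ξ‖) ^ (-(p : ℤ)) := by positivity
  calc ‖FTfull n (u (scal n Φ ε)) ξ‖ ≤ c i * ε ^ (-(Nf i : ℤ)) * (1 + ‖ξ‖) ^ (-(p : ℤ)) := key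
    _ ≤ (1 + ∑ j ∈ t, c j) * ε ^ (-((t.sup fun i => Nf i : ℕ) : ℤ)) * (1 + ‖ξ‖) ^ (-(p : ℤ)) := by
        refine mul_le_mul_of_nonneg_right ?_ hy.le
        exact mul_le_mul hci hzpow (zpow_nonneg hε.le _) (by linarith)


end
end

section
/- Let Λ₁, Λ₂ and Γ be closed cones in ℝⁿ (closed subsets containing 0 and stable under multiplication by nonnegative scalars) with Γ ∩ (Λ₁ + Λ₂) = {0}. Let w₁, w₂ : ℝⁿ → ℂ be continuous functions such that for some M ∈ ℕ and C > 0 one has |w_j(η)| ≤ C(1+|η|)^M for all η ∈ ℝⁿ (j = 1, 2), and such that for every p ∈ ℕ there is c_p > 0 with |w_j(η)| ≤ c_p(1+|η|)^{−p} for all η ∉ Λ_j (j = 1, 2). Then for every ξ ∈ Γ\{0} the integral (w₁ * w₂)(ξ) = ∫_{ℝⁿ} w₁(ξ − η) w₂(η) dη converges absolutely, and for every p ∈ ℕ there exists C_p > 0 with |(w₁ * w₂)(ξ)| ≤ C_p(1+|ξ|)^{−p} for all ξ ∈ Γ\{0}. -/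
open MeasureTheory Metric Pointwise

/-!
Compactness of the unit sphere separates closed cones meeting only at the origin: there is
`δ > 0` with `‖ξ - η‖ ≥ δ ‖ξ‖` for `ξ ∈ Γ` and `η ∈ Λ₁ ∪ Λ₂`. Hence, for `ξ ∈ Γ \ {0}`, in every
splitting `ξ = (ξ - η) + η` one summand lies outside its cone and has norm at least `δ ‖ξ‖`
(or `‖ξ‖ / 2`). The corresponding factor of the integrand decays faster than any power there;
this absorbs the polynomial growth of the other factor, via Peetre's inequality
`1 + ‖u‖ ≤ (1 + ‖ξ‖) (1 + ‖v‖)` for `u = ξ - v`, and leaves `(1 + ‖ξ‖)^(-p)` times the integrable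
weight `(1 + ‖η‖)^(-(n+1)) + (1 + ‖ξ - η‖)^(-(n+1))`.
-/

section Cones

variable {E : Type*} [NormedAddCommGroup E] [NormedSpace ℝ E] [ProperSpace E]

theorem exists_pos_mul_norm_le_norm_sub_of_cone_inter_subset_zero {A B : Set E}
    (hA : IsClosed A) (hB : IsClosed B) (hAB : A ∩ B ⊆ {0})
    (hAcone : ∀ x ∈ A, ∀ t : ℝ, 0 ≤ t → t • x ∈ A)
    (hBcone : ∀ x ∈ B, ∀ t : ℝ, 0 ≤ t → t • x ∈ B) :
    ∃ δ : ℝ, 0 < δ ∧ ∀ x ∈ A, ∀ y ∈ B, δ * ‖x‖ ≤ ‖x - y‖ := by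
  have hdisj : Disjoint (A ∩ sphere 0 1) B := by
    refine Set.disjoint_left.2 fun u hu huB => ?_
    have hu0 : u = 0 := hAB ⟨hu.1, huB⟩
    simpa [hu0] using hu.2
  obtain ⟨r, hr, hsep⟩ :=
    exists_pos_forall_lt_edist ((isCompact_sphere 0 1).inter_left hA) hB hdisj
  refine ⟨r, hr, fun x hxA y hyB => ?_⟩
  rcases eq_or_ne x 0 with rfl | hx0
  · simp
  have hx : 0 < ‖x‖ := norm_pos_iff.2 hx0
  have hunit : ‖x‖⁻¹ • x ∈ A ∩ sphere 0 1 :=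
    ⟨hAcone x hxA _ (inv_nonneg.2 hx.le), by simp [norm_smul, hx.ne']⟩
  have hlt := hsep _ hunit _ (hBcone y hyB _ (inv_nonneg.2 hx.le))
  rw [edist_dist, ENNReal.coe_lt_ofReal, dist_eq_norm, ← smul_sub, norm_smul,
    norm_inv, norm_norm, inv_mul_eq_div, lt_div_iff₀ hx] at hlt
  exact hlt.le

theorem exists_pos_cone_add_dichotomy {Λ₁ Λ₂ Γ : Set E}
    (hΛ₁ : IsClosed Λ₁) (hΛ₂ : IsClosed Λ₂) (hΓ : IsClosed Γ) (hΛ₁0 : (0 : E) ∈ Λ₁)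
    (hΛ₂0 : (0 : E) ∈ Λ₂) (hΛ₁cone : ∀ x ∈ Λ₁, ∀ t : ℝ, 0 ≤ t → t • x ∈ Λ₁)
    (hΛ₂cone : ∀ x ∈ Λ₂, ∀ t : ℝ, 0 ≤ t → t • x ∈ Λ₂)
    (hΓcone : ∀ x ∈ Γ, ∀ t : ℝ, 0 ≤ t → t • x ∈ Γ) (hsep : Γ ∩ (Λ₁ + Λ₂) ⊆ {0}) :
    ∃ δ : ℝ, 0 < δ ∧ δ ≤ 1 ∧ ∀ x y, x + y ∈ Γ \ {0} →
      (x ∉ Λ₁ ∧ δ * ‖x + y‖ ≤ ‖x‖) ∨ (y ∉ Λ₂ ∧ δ * ‖x + y‖ ≤ ‖y‖) := by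
  obtain ⟨δ₁, hδ₁, h₁⟩ := exists_pos_mul_norm_le_norm_sub_of_cone_inter_subset_zero hΓ hΛ₁
    (fun x hx => hsep ⟨hx.1, by simpa using Set.add_mem_add hx.2 hΛ₂0⟩) hΓcone hΛ₁cone
  obtain ⟨δ₂, hδ₂, h₂⟩ := exists_pos_mul_norm_le_norm_sub_of_cone_inter_subset_zero hΓ hΛ₂
    (fun x hx => hsep ⟨hx.1, by simpa using Set.add_mem_add hΛ₁0 hx.2⟩) hΓcone hΛ₂cone
  set δ := min (min δ₁ δ₂) (1 / 2)
  have hδδ₁ : δ ≤ δ₁ := (min_le_left _ _).trans (min_le_left _ _)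
  have hδδ₂ : δ ≤ δ₂ := (min_le_left _ _).trans (min_le_right _ _)
  have hδ : δ ≤ 1 / 2 := min_le_right _ _
  refine ⟨δ, by positivity, by linarith, fun x y ⟨hΓxy, hne⟩ => ?_⟩
  have hnorm := norm_nonneg (x + y)
  by_cases hx : x ∈ Λ₁
  · have hy : y ∉ Λ₂ := fun hy => hne (hsep ⟨hΓxy, Set.add_mem_add hx hy⟩)
    have := h₁ _ hΓxy x hx
    rw [add_sub_cancel_left] at this
    exact Or.inr ⟨hy, by nlinarith⟩
  by_cases hy : y ∈ Λ₂
  · have := h₂ _ hΓxy y hy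
    rw [add_sub_cancel_right] at this
    exact Or.inl ⟨hx, by nlinarith⟩
  have hle : ‖x + y‖ ≤ ‖x‖ + ‖y‖ := norm_add_le x y
  rcases le_total ‖y‖ ‖x‖ with h | h
  · exact Or.inl ⟨hx, by nlinarith⟩
  · exact Or.inr ⟨hy, by nlinarith⟩

end Cones

theorem pow_mul_pow_mul_pow_le_pow {A B D δ : ℝ} (M p k : ℕ) (hA : 0 ≤ A) (hD : 0 ≤ D)
    (hδ : 0 ≤ δ) (hDAB : D ≤ A * B) (hδAB : δ * A ≤ B) :
    δ ^ (p + M) * A ^ p * D ^ M * B ^ k ≤ B ^ (p + M + M + k) := by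
  have hB : 0 ≤ B := (mul_nonneg hδ hA).trans hδAB
  calc δ ^ (p + M) * A ^ p * D ^ M * B ^ k ≤ δ ^ (p + M) * A ^ p * (A * B) ^ M * B ^ k := by
        gcongr
    _ = (δ * A) ^ (p + M) * B ^ (M + k) := by ring
    _ ≤ B ^ (p + M) * B ^ (M + k) := by gcongr
    _ = B ^ (p + M + M + k) := by ring

theorem mul_le_of_le_pow_of_le_inv_pow {a b C c δ s t r : ℝ} {M p k : ℕ} (hC : 0 ≤ C)
    (hb : 0 ≤ b) (hs : 0 ≤ s) (ht : 0 ≤ t) (hδ : 0 < δ) (hδ1 : δ ≤ 1) (htsr : t ≤ s + r)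
    (hδsr : δ * s ≤ r) (ha : a ≤ C * (1 + t) ^ M) (hbr : b ≤ c * ((1 + r) ^ (p + M + M + k))⁻¹) :
    a * b ≤ C * c / δ ^ (p + M) * ((1 + s) ^ p)⁻¹ * ((1 + r) ^ k)⁻¹ := by
  have hr : 0 ≤ r := (mul_nonneg hδ.le hs).trans hδsr
  have hc : 0 ≤ c * ((1 + r) ^ (p + M + M + k))⁻¹ := hb.trans hbr
  have key := pow_mul_pow_mul_pow_le_pow M p k (by positivity) (by positivity) hδ.le
    (show 1 + t ≤ (1 + s) * (1 + r) by nlinarith) (show δ * (1 + s) ≤ 1 + r by nlinarith)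
  have hc0 : 0 ≤ c := (mul_nonneg_iff_of_pos_right (by positivity)).1 hc
  calc a * b ≤ C * (1 + t) ^ M * (c * ((1 + r) ^ (p + M + M + k))⁻¹) :=
        mul_le_mul ha hbr hb (by positivity)
    _ = C * c * ((1 + t) ^ M / (1 + r) ^ (p + M + M + k)) := by ring
    _ ≤ C * c * (1 / (δ ^ (p + M) * (1 + s) ^ p * (1 + r) ^ k)) := by
        refine mul_le_mul_of_nonneg_left ?_ (mul_nonneg hC hc0)
        rw [div_le_div_iff₀ (by positivity) (by positivity)]
        linarith
    _ = C * c / δ ^ (p + M) * ((1 + s) ^ p)⁻¹ * ((1 + r) ^ k)⁻¹ := by ring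

theorem exists_norm_mul_le_of_cone_dichotomy {E R : Type*} [NormedAddCommGroup E] [NormedRing R]
    {Λ₁ Λ₂ S : Set E} {w₁ w₂ : E → R} {M : ℕ} {C δ : ℝ} (hC : 0 ≤ C) (hδ : 0 < δ) (hδ1 : δ ≤ 1)
    (hw₁poly : ∀ η, ‖w₁ η‖ ≤ C * (1 + ‖η‖) ^ M) (hw₂poly : ∀ η, ‖w₂ η‖ ≤ C * (1 + ‖η‖) ^ M)
    (hw₁dec : ∀ p : ℕ, ∃ c : ℝ, 0 < c ∧ ∀ η ∉ Λ₁, ‖w₁ η‖ ≤ c * (1 + ‖η‖) ^ (-(p : ℤ)))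
    (hw₂dec : ∀ p : ℕ, ∃ c : ℝ, 0 < c ∧ ∀ η ∉ Λ₂, ‖w₂ η‖ ≤ c * (1 + ‖η‖) ^ (-(p : ℤ)))
    (hdich : ∀ x y, x + y ∈ S → (x ∉ Λ₁ ∧ δ * ‖x + y‖ ≤ ‖x‖) ∨ (y ∉ Λ₂ ∧ δ * ‖x + y‖ ≤ ‖y‖))
    (p k : ℕ) :
    ∃ K : ℝ, 0 ≤ K ∧ ∀ ξ ∈ S, ∀ η, ‖w₁ (ξ - η) * w₂ η‖ ≤
      K * ((1 + ‖ξ‖) ^ p)⁻¹ * (((1 + ‖η‖) ^ k)⁻¹ + ((1 + ‖ξ - η‖) ^ k)⁻¹) := by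
  obtain ⟨c₁, hc₁, hw₁c⟩ := hw₁dec (p + M + M + k)
  obtain ⟨c₂, -, hw₂c⟩ := hw₂dec (p + M + M + k)
  simp only [zpow_neg, zpow_natCast] at hw₁c hw₂c
  have hw₁c' : ∀ x ∉ Λ₁, ‖w₁ x‖ ≤ max c₁ c₂ * ((1 + ‖x‖) ^ (p + M + M + k))⁻¹ :=
    fun x hx => (hw₁c x hx).trans (by gcongr; exact le_max_left _ _)
  have hw₂c' : ∀ y ∉ Λ₂, ‖w₂ y‖ ≤ max c₁ c₂ * ((1 + ‖y‖) ^ (p + M + M + k))⁻¹ :=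
    fun y hy => (hw₂c y hy).trans (by gcongr; exact le_max_right _ _)
  have hc : 0 ≤ max c₁ c₂ := le_max_of_le_left hc₁.le
  refine ⟨C * max c₁ c₂ / δ ^ (p + M), by positivity, fun ξ hξ η => ?_⟩
  have hsplit : ξ - η + η = ξ := sub_add_cancel ξ η
  rcases hdich (ξ - η) η (by rwa [hsplit]) with ⟨hx, hδx⟩ | ⟨hy, hδy⟩
  · rw [hsplit] at hδx
    have hle : ‖η‖ ≤ ‖ξ‖ + ‖ξ - η‖ := by simpa using norm_sub_le ξ (ξ - η)
    calc ‖w₁ (ξ - η) * w₂ η‖ ≤ ‖w₂ η‖ * ‖w₁ (ξ - η)‖ := (norm_mul_le _ _).trans_eq (mul_comm _ _)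
      _ ≤ C * max c₁ c₂ / δ ^ (p + M) * ((1 + ‖ξ‖) ^ p)⁻¹ * ((1 + ‖ξ - η‖) ^ k)⁻¹ :=
        mul_le_of_le_pow_of_le_inv_pow hC (norm_nonneg _) (norm_nonneg _) (norm_nonneg _) hδ
          hδ1 hle hδx (hw₂poly η) (hw₁c' _ hx)
      _ ≤ _ := by gcongr; exact le_add_of_nonneg_left (by positivity)
  · rw [hsplit] at hδy
    calc ‖w₁ (ξ - η) * w₂ η‖ ≤ ‖w₁ (ξ - η)‖ * ‖w₂ η‖ := norm_mul_le _ _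
      _ ≤ C * max c₁ c₂ / δ ^ (p + M) * ((1 + ‖ξ‖) ^ p)⁻¹ * ((1 + ‖η‖) ^ k)⁻¹ :=
        mul_le_of_le_pow_of_le_inv_pow hC (norm_nonneg _) (norm_nonneg _) (norm_nonneg _) hδ
          hδ1 (norm_sub_le ξ η) hδy (hw₁poly _) (hw₂c' _ hy)
      _ ≤ _ := by gcongr; exact le_add_of_nonneg_right (by positivity)

theorem integrable_inv_one_add_norm_pow {E : Type*} [NormedAddCommGroup E] [NormedSpace ℝ E]
    [FiniteDimensional ℝ E] [MeasurableSpace E] [BorelSpace E] (μ : Measure E)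
    [μ.IsAddHaarMeasure] {k : ℕ} (hk : Module.finrank ℝ E < k) :
    Integrable (fun x : E => ((1 + ‖x‖) ^ k)⁻¹) μ := by
  refine (integrable_one_add_norm (μ := μ) (r := k) (by exact_mod_cast hk)).congr ?_
  filter_upwards with x
  rw [Real.rpow_neg (by positivity), Real.rpow_natCast]

theorem integrable_and_norm_integral_le_of_norm_le_add_comp_sub {G F : Type*} [MeasurableSpace G]
    [AddGroup G] [MeasurableAdd G] [MeasurableNeg G] {μ : Measure G} [μ.IsNegInvariant]
    [μ.IsAddLeftInvariant] [NormedAddCommGroup F] [NormedSpace ℝ F] {f : G → F} {g : G → ℝ}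
    (hf : AEStronglyMeasurable f μ) (hg : Integrable g μ) {K : ℝ} {ξ : G}
    (hfg : ∀ η, ‖f η‖ ≤ K * (g η + g (ξ - η))) :
    Integrable f μ ∧ ‖∫ η, f η ∂μ‖ ≤ K * (2 * ∫ η, g η ∂μ) := by
  have hbound : Integrable (fun η => K * (g η + g (ξ - η))) μ :=
    (hg.add (hg.comp_sub_left ξ)).const_mul K
  refine ⟨hbound.mono' hf (ae_of_all _ hfg), ?_⟩
  calc ‖∫ η, f η ∂μ‖ ≤ ∫ η, K * (g η + g (ξ - η)) ∂μ :=
        norm_integral_le_of_norm_le hbound (ae_of_all _ hfg)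
    _ = K * (2 * ∫ η, g η ∂μ) := by
        rw [integral_const_mul, integral_add hg (hg.comp_sub_left ξ),
          integral_sub_left_eq_self, two_mul]

theorem stmt6_general (n : ℕ) (Λ₁ Λ₂ Γ : Set (EuclideanSpace ℝ (Fin n)))
    (hΛ₁closed : IsClosed Λ₁) (hΛ₂closed : IsClosed Λ₂) (hΓclosed : IsClosed Γ)
    (hΛ₁0 : (0 : EuclideanSpace ℝ (Fin n)) ∈ Λ₁)
    (hΛ₂0 : (0 : EuclideanSpace ℝ (Fin n)) ∈ Λ₂)
    (hΛ₁cone : ∀ x ∈ Λ₁, ∀ t : ℝ, 0 ≤ t → t • x ∈ Λ₁)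
    (hΛ₂cone : ∀ x ∈ Λ₂, ∀ t : ℝ, 0 ≤ t → t • x ∈ Λ₂)
    (hΓcone : ∀ x ∈ Γ, ∀ t : ℝ, 0 ≤ t → t • x ∈ Γ)
    (hsep : Γ ∩ (Λ₁ + Λ₂) = {0})
    (w₁ w₂ : EuclideanSpace ℝ (Fin n) → ℂ)
    (hw₁cont : Continuous w₁) (hw₂cont : Continuous w₂)
    (M : ℕ) (C : ℝ) (hC : 0 < C)
    (hw₁poly : ∀ η, ‖w₁ η‖ ≤ C * (1 + ‖η‖) ^ M)
    (hw₂poly : ∀ η, ‖w₂ η‖ ≤ C * (1 + ‖η‖) ^ M)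
    (hw₁dec : ∀ p : ℕ, ∃ c : ℝ, 0 < c ∧ ∀ η ∉ Λ₁, ‖w₁ η‖ ≤ c * (1 + ‖η‖) ^ (-(p : ℤ)))
    (hw₂dec : ∀ p : ℕ, ∃ c : ℝ, 0 < c ∧ ∀ η ∉ Λ₂, ‖w₂ η‖ ≤ c * (1 + ‖η‖) ^ (-(p : ℤ))) :
    (∀ ξ ∈ Γ \ {0}, Integrable (fun η => w₁ (ξ - η) * w₂ η)) ∧
    ∀ p : ℕ, ∃ Cp : ℝ, 0 < Cp ∧ ∀ ξ ∈ Γ \ {0},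
      ‖∫ η, w₁ (ξ - η) * w₂ η‖ ≤ Cp * (1 + ‖ξ‖) ^ (-(p : ℤ)) := by
  obtain ⟨δ, hδ, hδ1, hdich⟩ := exists_pos_cone_add_dichotomy hΛ₁closed hΛ₂closed hΓclosed
    hΛ₁0 hΛ₂0 hΛ₁cone hΛ₂cone hΓcone hsep.le
  have hmeas (ξ : EuclideanSpace ℝ (Fin n)) :
      AEStronglyMeasurable (fun η => w₁ (ξ - η) * w₂ η) volume :=
    ((hw₁cont.comp (continuous_const.sub continuous_id)).mul hw₂cont).aestronglyMeasurable
  have hg := integrable_inv_one_add_norm_pow (volume : Measure (EuclideanSpace ℝ (Fin n)))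
    (k := n + 1) (by simp)
  set I : ℝ := ∫ η : EuclideanSpace ℝ (Fin n), ((1 + ‖η‖) ^ (n + 1))⁻¹
  have hconv (p : ℕ) : ∃ K : ℝ, 0 ≤ K ∧ ∀ ξ ∈ Γ \ {0},
      Integrable (fun η => w₁ (ξ - η) * w₂ η) ∧ ‖∫ η, w₁ (ξ - η) * w₂ η‖ ≤
        K * ((1 + ‖ξ‖) ^ p)⁻¹ * (2 * I) := by
    obtain ⟨K, hK, hKbound⟩ := exists_norm_mul_le_of_cone_dichotomy hC.le hδ hδ1 hw₁poly hw₂poly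
      hw₁dec hw₂dec hdich p (n + 1)
    exact ⟨K, hK, fun ξ hξ =>
      integrable_and_norm_integral_le_of_norm_le_add_comp_sub (hmeas ξ) hg (hKbound ξ hξ)⟩
  refine ⟨fun ξ hξ => ((hconv 0).choose_spec.2 ξ hξ).1, fun p => ?_⟩
  obtain ⟨K, hK, hKbound⟩ := hconv p
  refine ⟨K * (2 * I) + 1, by positivity, fun ξ hξ => ?_⟩
  rw [zpow_neg, zpow_natCast]
  calc ‖∫ η, w₁ (ξ - η) * w₂ η‖ ≤ K * ((1 + ‖ξ‖) ^ p)⁻¹ * (2 * I) :=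
        (hKbound ξ hξ).2
    _ ≤ (K * (2 * I) + 1) * ((1 + ‖ξ‖) ^ p)⁻¹ := by
        rw [mul_right_comm]
        gcongr
        linarith

/--
Let `Λ₁`, `Λ₂`, `Γ` be closed cones in `ℝⁿ` (closed subsets containing
`0`, stable under multiplication by nonnegative scalars) with `Γ ∩ (Λ₁ + Λ₂) = {0}`.
Let `w₁, w₂ : ℝⁿ → ℂ` be continuous, polynomially bounded, and rapidly decreasing off
`Λ₁` resp. `Λ₂`. Then for every `ξ ∈ Γ \ {0}` the convolution integral
`(w₁ * w₂)(ξ) = ∫ w₁(ξ−η) w₂(η) dη` converges absolutely and, for every `p ∈ ℕ`,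
`|(w₁ * w₂)(ξ)| ≤ C_p (1+|ξ|)^{−p}` on `Γ \ {0}`.
-/
theorem stmt6 (n : ℕ) (Λ₁ Λ₂ Γ : Set (EuclideanSpace ℝ (Fin n)))
    (hΛ₁closed : IsClosed Λ₁) (hΛ₂closed : IsClosed Λ₂) (hΓclosed : IsClosed Γ)
    (hΛ₁0 : (0 : EuclideanSpace ℝ (Fin n)) ∈ Λ₁)
    (hΛ₂0 : (0 : EuclideanSpace ℝ (Fin n)) ∈ Λ₂)
    (hΓ0 : (0 : EuclideanSpace ℝ (Fin n)) ∈ Γ)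
    (hΛ₁cone : ∀ x ∈ Λ₁, ∀ t : ℝ, 0 ≤ t → t • x ∈ Λ₁)
    (hΛ₂cone : ∀ x ∈ Λ₂, ∀ t : ℝ, 0 ≤ t → t • x ∈ Λ₂)
    (hΓcone : ∀ x ∈ Γ, ∀ t : ℝ, 0 ≤ t → t • x ∈ Γ)
    (hsep : Γ ∩ (Λ₁ + Λ₂) = {0})
    (w₁ w₂ : EuclideanSpace ℝ (Fin n) → ℂ)
    (hw₁cont : Continuous w₁) (hw₂cont : Continuous w₂)
    (M : ℕ) (C : ℝ) (hC : 0 < C)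
    (hw₁poly : ∀ η, ‖w₁ η‖ ≤ C * (1 + ‖η‖) ^ M)
    (hw₂poly : ∀ η, ‖w₂ η‖ ≤ C * (1 + ‖η‖) ^ M)
    (hw₁dec : ∀ p : ℕ, ∃ c : ℝ, 0 < c ∧ ∀ η ∉ Λ₁, ‖w₁ η‖ ≤ c * (1 + ‖η‖) ^ (-(p : ℤ)))
    (hw₂dec : ∀ p : ℕ, ∃ c : ℝ, 0 < c ∧ ∀ η ∉ Λ₂, ‖w₂ η‖ ≤ c * (1 + ‖η‖) ^ (-(p : ℤ))) :
    (∀ ξ ∈ Γ \ {0}, Integrable (fun η => w₁ (ξ - η) * w₂ η)) ∧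
    ∀ p : ℕ, ∃ Cp : ℝ, 0 < Cp ∧ ∀ ξ ∈ Γ \ {0},
      ‖∫ η, w₁ (ξ - η) * w₂ η‖ ≤ Cp * (1 + ‖ξ‖) ^ (-(p : ℤ)) :=
  stmt6_general n Λ₁ Λ₂ Γ hΛ₁closed hΛ₂closed hΓclosed hΛ₁0 hΛ₂0 hΛ₁cone hΛ₂cone hΓcone hsep w₁ w₂
    hw₁cont hw₂cont M C hC hw₁poly hw₂poly hw₁dec hw₂dec
end

section
/- Let (a_ε)_{ε∈(0,1]} be a bounded family of real numbers and let B be its set of limit points as ε → 0 (b ∈ B iff there is a sequence ε_k → 0 with a_{ε_k} → b). Let (ξ₀,τ₀) ∈ ℝ²\{(0,0)} be such that τ₀ ≠ −bξ₀ for all b ∈ B. Then there exist an open cone Γ ⊆ ℝ²\{0} containing (ξ₀,τ₀), a constant C > 0 and η > 0 such that |τ + a_ε ξ| ≥ C(|ξ| + |τ|) for all (ξ,τ) ∈ Γ and all 0 < ε < η. (In the Colombeau framework this shows the point (ξ₀,τ₀) is non-characteristic for the operator ∂_t + a∂_x with generalized constant coefficient a.) -/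
/-!
If `|τ₀ + a_ε ξ₀|` had no positive lower bound for small `ε`, compactness of `[-M, M]` would
produce `ε_k → 0` with `a_{ε_k} → b` and `τ₀ + b ξ₀ = 0`, so `b ∈ B` would be characteristic.
A lower bound `c` at `(ξ₀, τ₀)` survives as `c / 2` on a small ball around it, uniformly in
`|b| ≤ M`, and since both sides of the estimate are positively homogeneous, it extends to the
cone generated by that ball.
-/

open Filter Topology

section ClusterPoints

variable {ι X Y : Type*} [TopologicalSpace X] [TopologicalSpace Y] {F : Filter ι}

theorem MapClusterPt.exists_seq_mem_tendsto [FirstCountableTopology X] [F.IsCountablyGenerated]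
    {u : ι → X} {x : X} (hx : MapClusterPt x F u) {s : Set ι} (hs : s ∈ F) :
    ∃ e : ℕ → ι, (∀ k, e k ∈ s) ∧ Tendsto e atTop F ∧ Tendsto (u ∘ e) atTop (𝓝 x) := by
  obtain ⟨ψ, hψu, hψ⟩ := hx.exists_seq_tendsto
  obtain ⟨N, hN⟩ := eventually_atTop.1 (hψ.eventually_mem hs)
  exact ⟨fun k => ψ (k + N), fun k => hN _ (Nat.le_add_left N k),
    (tendsto_add_atTop_iff_nat N).2 hψ, (tendsto_add_atTop_iff_nat N).2 hψu⟩

theorem IsCompact.exists_mapClusterPt_of_mapClusterPt_comp [T2Space Y] {s : Set X}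
    (hs : IsCompact s) {u : ι → X} (hu : ∀ᶠ i in F, u i ∈ s) {g : X → Y} (hg : Continuous g)
    {y : Y} (hy : MapClusterPt y F (g ∘ u)) : ∃ x ∈ s, MapClusterPt x F u ∧ g x = y := by
  set H := F ⊓ comap (g ∘ u) (𝓝 y)
  have : H.NeBot := by
    rw [← map_neBot_iff (f := g ∘ u), Filter.push_pull, inf_comm]
    exact hy
  obtain ⟨x, hxs, hx⟩ :=
    hs.exists_mapClusterPt (f := H) (le_principal_iff.2 (mem_map.2 (mem_inf_of_left hu)))
  refine ⟨x, hxs, hx.mono inf_le_left, ?_⟩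
  by_contra hne
  have hgx : ClusterPt (g x) (map (g ∘ u) H) := hx.continuousAt_comp hg.continuousAt
  exact (hgx.mono (tendsto_comap.mono_left inf_le_right)).ne (disjoint_nhds_nhds.2 hne).eq_bot

theorem exists_pos_eventually_le_norm {E : Type*} [SeminormedAddCommGroup E] {f : ι → E}
    (h : ¬MapClusterPt 0 F f) : ∃ c > 0, ∀ᶠ i in F, c ≤ ‖f i‖ := by
  contrapose! h
  refine Metric.nhds_basis_ball.mapClusterPt_iff_frequently.2 fun c hc => ?_
  simpa [not_le] using h c hc

end ClusterPoints

section ConeHull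

variable {E : Type*} [AddCommGroup E] [Module ℝ E] {U : Set E}

def coneHull (U : Set E) : Set E := {p | ∃ t : ℝ, 0 < t ∧ t • p ∈ U}

theorem subset_coneHull : U ⊆ coneHull U := fun p hp => ⟨1, one_pos, by rwa [one_smul]⟩

theorem zero_notMem_coneHull (hU : (0 : E) ∉ U) : (0 : E) ∉ coneHull U := by
  rintro ⟨t, -, ht⟩
  rw [smul_zero] at ht
  exact hU ht

theorem smul_mem_coneHull {p : E} (hp : p ∈ coneHull U) {s : ℝ} (hs : 0 < s) :
    s • p ∈ coneHull U := by
  obtain ⟨t, ht, htp⟩ := hp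
  refine ⟨t / s, div_pos ht hs, ?_⟩
  rwa [smul_smul, div_mul_cancel₀ t hs.ne']

theorem isOpen_coneHull [TopologicalSpace E] [ContinuousConstSMul ℝ E] (hU : IsOpen U) :
    IsOpen (coneHull U) := by
  have : coneHull U = ⋃ t ∈ Set.Ioi (0 : ℝ), (t • ·) ⁻¹' U := by
    ext p; simp [coneHull]
  rw [this]
  exact isOpen_biUnion fun t _ => hU.preimage (continuous_const_smul t)

theorem le_of_mem_coneHull {f g : E → ℝ} (hf : ∀ t > 0, ∀ p, f (t • p) = t * f p)
    (hg : ∀ t > 0, ∀ p, g (t • p) = t * g p) (h : ∀ q ∈ U, f q ≤ g q) {p : E}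
    (hp : p ∈ coneHull U) : f p ≤ g p := by
  obtain ⟨t, ht, htp⟩ := hp
  have := h _ htp
  rw [hf t ht, hg t ht] at this
  exact le_of_mul_le_mul_left this ht

end ConeHull

theorem abs_snd_add_mul_fst_ge (b : ℝ) (p q : ℝ × ℝ) :
    |p.2 + b * p.1| - (1 + |b|) * dist q p ≤ |q.2 + b * q.1| := by
  have h1 : |q.1 - p.1| ≤ dist q p := (Real.dist_eq _ _).symm.trans_le (le_max_left _ _)
  have h2 : |q.2 - p.2| ≤ dist q p := (Real.dist_eq _ _).symm.trans_le (le_max_right _ _)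
  have hdiff : |p.2 + b * p.1| - |q.2 + b * q.1| ≤ |q.2 - p.2| + |b| * |q.1 - p.1| :=
    calc |p.2 + b * p.1| - |q.2 + b * q.1| ≤ |(q.2 - p.2) + b * (q.1 - p.1)| := by
          rw [show (q.2 - p.2) + b * (q.1 - p.1) = (q.2 + b * q.1) - (p.2 + b * p.1) by ring,
            abs_sub_comm]
          exact abs_sub_abs_le_abs_sub _ _
      _ ≤ |q.2 - p.2| + |b| * |q.1 - p.1| := (abs_add_le _ _).trans_eq (by rw [abs_mul])
  linarith [mul_le_mul_of_nonneg_left h1 (abs_nonneg b)]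

theorem abs_fst_add_abs_snd_le (p q : ℝ × ℝ) :
    |q.1| + |q.2| ≤ |p.1| + |p.2| + 2 * dist q p := by
  have h1 : |q.1 - p.1| ≤ dist q p := (Real.dist_eq _ _).symm.trans_le (le_max_left _ _)
  have h2 : |q.2 - p.2| ≤ dist q p := (Real.dist_eq _ _).symm.trans_le (le_max_right _ _)
  have := abs_sub_abs_le_abs_sub q.1 p.1
  have := abs_sub_abs_le_abs_sub q.2 p.2
  linarith

theorem exists_ball_forall_le_abs_snd_add_mul_fst {c M : ℝ} (hc : 0 < c) (hM : 0 ≤ M)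
    (p₀ : ℝ × ℝ) : ∃ δ > 0, ∃ C > 0, ∀ b, |b| ≤ M → c ≤ |p₀.2 + b * p₀.1| →
      ∀ q ∈ Metric.ball p₀ δ, C * (|q.1| + |q.2|) ≤ |q.2 + b * q.1| := by
  set δ := c / (2 * (M + 1))
  have hδ : 0 < δ := by positivity
  set R := |p₀.1| + |p₀.2| + 2 * δ
  have hR : 0 < R := by positivity
  refine ⟨δ, hδ, c / (2 * R), by positivity, fun b hb hcb q hq => ?_⟩
  rw [Metric.mem_ball] at hq
  have hlower : c / 2 ≤ |q.2 + b * q.1| := by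
    have hMδ : (M + 1) * δ = c / 2 := by simp only [δ]; field_simp
    nlinarith [abs_snd_add_mul_fst_ge b p₀ q, dist_nonneg (x := q) (y := p₀)]
  have hupper : |q.1| + |q.2| ≤ R := by linarith [abs_fst_add_abs_snd_le p₀ q]
  calc c / (2 * R) * (|q.1| + |q.2|) ≤ c / (2 * R) * R := by gcongr
    _ = c / 2 := by field_simp
    _ ≤ _ := hlower

/--
Let `(a_ε)_{ε∈(0,1]}` be a bounded family of real numbers with limit
point set `B` as `ε → 0`. Let `(ξ₀,τ₀) ∈ ℝ² \ {0}` with `τ₀ ≠ −b·ξ₀` for all `b ∈ B`.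
Then there are an open cone `Γ ⊆ ℝ² \ {0}` containing `(ξ₀,τ₀)`, `C > 0` and `η > 0`
such that `|τ + a_ε ξ| ≥ C(|ξ| + |τ|)` for all `(ξ,τ) ∈ Γ` and `0 < ε < η`.
-/
theorem stmt10 (a : ℝ → ℝ)
    (hbound : ∃ C : ℝ, ∀ ε ∈ Set.Ioc (0 : ℝ) 1, |a ε| ≤ C)
    (B : Set ℝ)
    (hB : B = {b | ∃ e : ℕ → ℝ, (∀ k, e k ∈ Set.Ioc (0 : ℝ) 1) ∧
      Tendsto e atTop (𝓝 0) ∧ Tendsto (fun k => a (e k)) atTop (𝓝 b)})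
    (ξ₀ τ₀ : ℝ) (hne : (ξ₀, τ₀) ≠ (0, 0))
    (hchar : ∀ b ∈ B, τ₀ ≠ -b * ξ₀) :
    ∃ Γ : Set (ℝ × ℝ),
      IsOpen Γ ∧ (0 : ℝ × ℝ) ∉ Γ ∧ (∀ p ∈ Γ, ∀ t : ℝ, 0 < t → t • p ∈ Γ) ∧
      (ξ₀, τ₀) ∈ Γ ∧
      ∃ C : ℝ, 0 < C ∧ ∃ η : ℝ, 0 < η ∧
        ∀ p ∈ Γ, ∀ ε : ℝ, 0 < ε → ε < η →
          C * (|p.1| + |p.2|) ≤ |p.2 + a ε * p.1| := by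
  obtain ⟨M, hM⟩ := hbound
  have hM0 : 0 ≤ M := (abs_nonneg _).trans (hM 1 ⟨one_pos, le_rfl⟩)
  have hbdd : ∀ᶠ ε in 𝓝[>] 0, a ε ∈ Set.Icc (-M) M :=
    mem_of_superset (Ioc_mem_nhdsGT one_pos) fun ε hε => abs_le.1 (hM ε hε)
  obtain ⟨c, hc, hca⟩ : ∃ c > 0, ∀ᶠ ε in 𝓝[>] 0, c ≤ |τ₀ + a ε * ξ₀| := by
    refine exists_pos_eventually_le_norm (f := fun ε => τ₀ + a ε * ξ₀) fun h0 => ?_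
    obtain ⟨b, -, hb, hb0⟩ := isCompact_Icc.exists_mapClusterPt_of_mapClusterPt_comp hbdd
      (by fun_prop : Continuous fun b : ℝ => τ₀ + b * ξ₀) h0
    obtain ⟨e, he, he0, hea⟩ := hb.exists_seq_mem_tendsto (Ioc_mem_nhdsGT one_pos)
    refine hchar b (hB ▸ ⟨e, he, he0.mono_right nhdsWithin_le_nhds, hea⟩) ?_
    rw [neg_mul]
    exact eq_neg_of_add_eq_zero_left hb0
  obtain ⟨η, hη, hηsub⟩ := mem_nhdsGT_iff_exists_Ioo_subset.1 (hca.and hbdd)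
  obtain ⟨δ, hδ, C, hC, hball⟩ := exists_ball_forall_le_abs_snd_add_mul_fst hc hM0 (ξ₀, τ₀)
  refine ⟨coneHull (Metric.ball (ξ₀, τ₀) δ ∩ {0}ᶜ),
    isOpen_coneHull (Metric.isOpen_ball.inter isOpen_compl_singleton),
    zero_notMem_coneHull fun h => h.2 rfl, fun p hp t ht => smul_mem_coneHull hp ht,
    subset_coneHull ⟨Metric.mem_ball_self hδ, hne⟩, C, hC, η, hη, fun p hp ε hε hεη => ?_⟩
  obtain ⟨hcε, hMε⟩ := hηsub ⟨hε, hεη⟩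
  refine le_of_mem_coneHull (fun t ht q => ?_) (fun t ht q => ?_)
    (fun q hq => hball (a ε) (abs_le.2 hMε) hcε q hq.1) hp
  · simp only [Prod.smul_fst, Prod.smul_snd, smul_eq_mul, abs_mul, abs_of_pos ht]; ring
  · simp only [Prod.smul_fst, Prod.smul_snd, smul_eq_mul]
    rw [mul_left_comm, ← mul_add, abs_mul, abs_of_pos ht]
end

section
/- Let (a_ε)_{ε∈(0,1]} be a bounded family of real numbers and let B be its set of limit points as ε → 0. Let K ⊆ ℝ be closed and let (x₀,t₀) ∈ ℝ² be such that x₀ − b t₀ ∉ K for every b ∈ B. Then there exist a neighborhood V of (x₀,t₀) in ℝ² and η > 0 such that x − a_ε t ∉ K for all (x,t) ∈ V and all 0 < ε < η. (This establishes the singular support inclusion sing supp(U) ⊆ {(x,t) : ∃b ∈ B with x − bt ∈ sing supp(U₀)} for the transport equation (∂_t + a∂_x)U = 0, U|_{t=0} = U₀ in the Colombeau setting.) -/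
/-!
The parameters `b` with `x₀ - b t₀ ∈ K` form a compact set of values which `a_ε` does not
accumulate at, so for small `ε` the values `a_ε` stay away from an open set `W` around it. On the
remaining compact range of `b` the closed condition `x - b t ∈ K` fails at `(x₀, t₀)`, and the
tube lemma spreads this to a neighbourhood of `(x₀, t₀)`.
-/

open Filter Topology Set

theorem eventually_nhds_prod_notMem_of_clusterPt {X Y : Type*} [TopologicalSpace X]
    [TopologicalSpace Y] {m : Filter Y} {s : Set Y} {S : Set (X × Y)} {x₀ : X}
    (hs : IsCompact s) (hsm : s ∈ m) (hS : IsClosed S)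
    (havoid : ∀ b, ClusterPt b m → (x₀, b) ∉ S) :
    ∀ᶠ q in 𝓝 x₀ ×ˢ m, q ∉ S := by
  have hT : IsCompact (s ∩ {b | (x₀, b) ∈ S}) :=
    hs.inter_right (hS.preimage (Continuous.prodMk_right x₀))
  obtain ⟨W, ⟨hWo, hTW⟩, hWm⟩ := (hasBasis_nhdsSet _).disjoint_iff_left.1 <|
    hT.disjoint_nhdsSet_left.2 fun b hb =>
      not_not.1 fun h => havoid b (clusterPt_iff_not_disjoint.2 h) hb.2
  have htube : ∀ᶠ x in 𝓝 x₀, ∀ y ∈ s \ W, (x, y) ∉ S :=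
    (hs.diff hWo).eventually_forall_of_forall_eventually fun y hy =>
      hS.isOpen_compl.mem_nhds fun hyS => hy.2 (hTW ⟨hy.1, hyS⟩)
  filter_upwards [prod_mem_prod htube (inter_mem hsm hWm)] with q ⟨hx, hys, hyW⟩
  exact hx q.2 ⟨hys, hyW⟩

theorem MapClusterPt.exists_seq_mem_tendsto_s11 {α Y : Type*} [TopologicalSpace Y]
    [FirstCountableTopology Y] {l : Filter α} [l.IsCountablyGenerated] {a : α → Y} {b : Y}
    {s : Set α} (h : MapClusterPt b l a) (hs : s ∈ l) :
    ∃ e : ℕ → α, (∀ k, e k ∈ s) ∧ Tendsto e atTop l ∧ Tendsto (a ∘ e) atTop (𝓝 b) := by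
  obtain ⟨ψ, hψb, hψl⟩ := h.exists_seq_tendsto
  obtain ⟨N, hN⟩ := eventually_atTop.1 (hψl hs)
  exact ⟨fun k => ψ (k + N), fun k => hN _ (Nat.le_add_left N k),
    (tendsto_add_atTop_iff_nat N).2 hψl, (tendsto_add_atTop_iff_nat N).2 hψb⟩

/--
Let `(a_ε)_{ε∈(0,1]}` be a bounded family of real numbers with limit
point set `B` as `ε → 0`. Let `K ⊆ ℝ` be closed and `(x₀,t₀) ∈ ℝ²` with
`x₀ − b·t₀ ∉ K` for every `b ∈ B`. Then there are a neighborhood `V` of `(x₀,t₀)` in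
`ℝ²` and `η > 0` such that `x − a_ε t ∉ K` for all `(x,t) ∈ V` and `0 < ε < η`.
-/
theorem stmt11 (a : ℝ → ℝ)
    (hbound : ∃ C : ℝ, ∀ ε ∈ Set.Ioc (0 : ℝ) 1, |a ε| ≤ C)
    (B : Set ℝ)
    (hB : B = {b | ∃ e : ℕ → ℝ, (∀ k, e k ∈ Set.Ioc (0 : ℝ) 1) ∧
      Tendsto e atTop (𝓝 0) ∧ Tendsto (fun k => a (e k)) atTop (𝓝 b)})
    (K : Set ℝ) (hK : IsClosed K)
    (x₀ t₀ : ℝ) (havoid : ∀ b ∈ B, x₀ - b * t₀ ∉ K) :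
    ∃ V ∈ 𝓝 ((x₀, t₀) : ℝ × ℝ), ∃ η : ℝ, 0 < η ∧
      ∀ p ∈ V, ∀ ε : ℝ, 0 < ε → ε < η → p.1 - a ε * p.2 ∉ K := by
  obtain ⟨C, hC⟩ := hbound
  have hIoc : Ioc (0 : ℝ) 1 ∈ 𝓝[>] 0 := Ioc_mem_nhdsGT zero_lt_one
  have hbounded : Icc (-C) C ∈ map a (𝓝[>] 0) :=
    mem_map.2 <| mem_of_superset hIoc fun ε hε => abs_le.1 (hC ε hε)
  have hclusterB : ∀ b, MapClusterPt b (𝓝[>] 0) a → b ∈ B := fun b hb => by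
    obtain ⟨e, he, he0, hea⟩ := hb.exists_seq_mem_tendsto_s11 hIoc
    exact hB ▸ ⟨e, he, he0.mono_right nhdsWithin_le_nhds, hea⟩
  have hpreimage : IsClosed {q : (ℝ × ℝ) × ℝ | q.1.1 - q.2 * q.1.2 ∈ K} :=
    hK.preimage (by fun_prop)
  have hev := (tendsto_id.prodMap tendsto_map).eventually <|
    eventually_nhds_prod_notMem_of_clusterPt (x₀ := (x₀, t₀)) isCompact_Icc hbounded hpreimage
      fun b hb => havoid b (hclusterB b hb)
  obtain ⟨⟨V, η⟩, ⟨hV, hη⟩, hVη⟩ :=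
    ((𝓝 _).basis_sets.prod (nhdsGT_basis 0)).eventually_iff.1 hev
  exact ⟨V, hV, η, hη, fun p hp ε hε hεη => hVη (mk_mem_prod hp ⟨hε, hεη⟩)⟩
end

section
/- Let ψ ∈ C_c^∞(ℝ²), φ ∈ C_c^∞(ℝ), let (a_ε)_{ε∈(0,1]} be a bounded family of real numbers with limit point set B as ε → 0, and let (ξ₀,τ₀) ∈ ℝ²\{(0,0)} satisfy τ₀ + bξ₀ ≠ 0 for all b ∈ B. Then for every k ∈ ℕ there exist C > 0 and η > 0 such that |∫∫ e^{−iω(ξ₀x + τ₀t)} ψ(x,t) φ_ε(x − a_ε t) dx dt| ≤ C ω^{−k} for all ω ≥ 1 and all 0 < ε < η, where φ_ε(x) = ε^{−1}φ(x/ε). (Thus the Fourier transform of ψ·φ_ε(x − a_ε t) is rapidly decreasing in the direction (ξ₀,τ₀), uniformly in ε.) -/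
open Filter Topology MeasureTheory

lemma iterDeriv_line (f : ℝ × ℝ → ℂ) (hf : ContDiff ℝ (⊤ : ℕ∞) f) (u α : ℝ) :
    ∀ (k : ℕ) (t : ℝ), iteratedDeriv k (fun s => f (u + α * s, s)) t
      = iteratedFDeriv ℝ k f (u + α * t, t) (fun _ => (α, 1)) := by
  intro k
  induction k with
  | zero => intro t; simp [iteratedFDeriv_zero_apply]
  | succ k ih =>
    intro t
    rw [iteratedDeriv_succ]
    set e := ContinuousMultilinearMap.apply ℝ (fun _ : Fin k => ℝ × ℝ) ℂ (fun _ => ((α, 1) : ℝ × ℝ)) with he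
    have hfun : iteratedDeriv k (fun s => f (u + α * s, s))
        = fun s => e (iteratedFDeriv ℝ k f (u + α * s, s)) := funext fun s => ih s
    rw [hfun]
    have hG : ContDiff ℝ 1 (iteratedFDeriv ℝ k f) :=
      hf.iteratedFDeriv_right (by exact_mod_cast (le_top : ((1 + k : ℕ) : ℕ∞) ≤ ⊤))
    have hL : HasDerivAt (fun s : ℝ => ((u + α * s, s) : ℝ × ℝ)) ((α, 1) : ℝ × ℝ) t := by
      apply HasDerivAt.prodMk
      · simpa using (hasDerivAt_id t).const_mul α |>.const_add u
      · exact hasDerivAt_id t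
    have h1 : HasDerivAt (fun s => iteratedFDeriv ℝ k f (u + α * s, s))
        (fderiv ℝ (iteratedFDeriv ℝ k f) (u + α * t, t) (α, 1)) t :=
      HasFDerivAt.comp_hasDerivAt (l := iteratedFDeriv ℝ k f) t ((hG.differentiable one_ne_zero (u + α * t, t)).hasFDerivAt) hL
    have h2 : HasDerivAt (fun s => e (iteratedFDeriv ℝ k f (u + α * s, s)))
        (e (fderiv ℝ (iteratedFDeriv ℝ k f) (u + α * t, t) (α, 1))) t :=
      (e.hasFDerivAt).comp_hasDerivAt t h1
    rw [h2.deriv]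
    rw [iteratedFDeriv_succ_apply_left]
    rfl

open Real in
lemma osc_bound (f : ℝ × ℝ → ℂ) (hf : ContDiff ℝ (⊤ : ℕ∞) f) (hfc : HasCompactSupport f)
    (R : ℝ) (hR0 : 0 < R) (hR : tsupport f ⊆ Metric.closedBall 0 R)
    (k : ℕ) (Ck : ℝ) (hCk : ∀ x, ‖iteratedFDeriv ℝ k f x‖ ≤ Ck)
    (M : ℝ) (u α : ℝ) (hα : |α| ≤ M) (c δ : ℝ) (hδ : 0 < δ) (hc : δ ≤ |c|)
    (ω : ℝ) (hω : 1 ≤ ω) :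
    ‖∫ t : ℝ, Complex.exp (-Complex.I * ω * (c * t)) * f (u + α * t, t)‖ ≤
      (2 * R * (Ck * max M 1 ^ k)) / (ω * δ) ^ k := by
  set h : ℝ → ℂ := fun s => f (u + α * s, s) with hh_def
  have hh : ContDiff ℝ (⊤ : ℕ∞) h := by
    apply hf.comp
    exact (contDiff_const.add (contDiff_const.mul contDiff_id)).prodMk contDiff_id
  -- support of h
  have hsupp0 : ∀ t : ℝ, t ∉ Set.Icc (-R) R → ((u + α * t, t) : ℝ × ℝ) ∉ tsupport f := by
    intro t ht hmem
    have := hR hmem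
    rw [Metric.mem_closedBall] at this
    have h2 : |t| ≤ R := by
      have := (norm_snd_le ((u + α * t, t) : ℝ × ℝ)).trans (by simpa using this)
      simpa using this
    rw [Set.mem_Icc] at ht
    rcases abs_le.1 h2 with ⟨h3, h4⟩
    exact ht ⟨h3, h4⟩
  have hsupp : ∀ t : ℝ, t ∉ Set.Icc (-R) R → f (u + α * t, t) = 0 := fun t ht =>
    image_eq_zero_of_notMem_tsupport (hsupp0 t ht)
  have hhc : HasCompactSupport h := by
    apply HasCompactSupport.intro isCompact_Icc hsupp
  -- iterated derivs: support and bound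
  have hder : ∀ t : ℝ, iteratedDeriv k h t = iteratedFDeriv ℝ k f (u + α * t, t) (fun _ => (α, 1)) :=
    iterDeriv_line f hf u α k
  have hbound : ∀ t : ℝ, ‖iteratedDeriv k h t‖ ≤ Ck * max M 1 ^ k := by
    intro t
    rw [hder t]
    calc ‖iteratedFDeriv ℝ k f (u + α * t, t) (fun _ => ((α, 1) : ℝ × ℝ))‖
        ≤ ‖iteratedFDeriv ℝ k f (u + α * t, t)‖ * ∏ _i : Fin k, ‖((α, 1) : ℝ × ℝ)‖ :=
          ContinuousMultilinearMap.le_opNorm _ _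
      _ ≤ Ck * max M 1 ^ k := by
          rw [Finset.prod_const, Finset.card_univ, Fintype.card_fin]
          have h1 : ‖((α, 1) : ℝ × ℝ)‖ ≤ max M 1 := by
            rw [Prod.norm_def]
            apply max_le_max
            · simpa using hα
            · simp
          have h0 : (0:ℝ) ≤ ‖((α, 1) : ℝ × ℝ)‖ := norm_nonneg _
          have hCk0 : 0 ≤ Ck := le_trans (norm_nonneg _) (hCk 0)
          exact mul_le_mul (hCk _) (pow_le_pow_left₀ h0 h1 k) (pow_nonneg h0 k) hCk0
  have hCk0 : 0 ≤ Ck := le_trans (norm_nonneg _) (hCk 0)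
  have hω0 : (0:ℝ) < ω := lt_of_lt_of_le one_pos hω
  -- compact support & integrability of iterated derivs of h
  have hders_c : ∀ n : ℕ, HasCompactSupport (iteratedDeriv n h) := by
    intro n
    apply HasCompactSupport.intro hhc.isCompact
    intro x hx
    rw [iteratedDeriv_eq_iteratedFDeriv]
    have h0 : iteratedFDeriv ℝ n h x = 0 := by
      by_contra h0
      exact hx (support_iteratedFDeriv_subset n (by simpa [Function.mem_support] using h0))
    simp [h0]
  have hint : ∀ n : ℕ, (n : ℕ∞) ≤ ⊤ → Integrable (iteratedDeriv n h) := fun n _ =>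
    (hh.continuous_iteratedDeriv n (by exact_mod_cast le_top)).integrable_of_hasCompactSupport (hders_c n)
  -- rewrite as Fourier integral
  have hπ : (0:ℝ) < π := Real.pi_pos
  set w : ℝ := ω * c / (2 * π) with hw
  have hFour : (∫ t : ℝ, Complex.exp (-Complex.I * ω * (c * t)) * h t)
      = FourierTransform.fourier h w := by
    rw [Real.fourier_eq']
    congr 1
    funext t
    simp only [RCLike.inner_apply, conj_trivial, smul_eq_mul]
    congr 2
    have h1 : -2 * π * (t * w) = -(ω * (c * t)) := by
      rw [hw]; field_simp
    rw [mul_comm w t, h1]; push_cast; ring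
  -- key identity
  have hh' : ContDiff ℝ ((⊤ : ℕ∞) : WithTop ℕ∞) h := hh.of_le (by simp)
  have hkey := Real.fourier_iteratedDeriv (N := (⊤ : ℕ∞)) hh' hint (n := k) (le_top : ((k : ℕ) : ℕ∞) ≤ ⊤)
  have hwnorm : ‖(2 * ↑π * Complex.I * (w : ℂ)) ^ k‖ = (ω * |c|) ^ k := by
    rw [norm_pow]
    congr 1
    have h2 : ‖2 * (π:ℂ) * Complex.I * (w:ℂ)‖ = 2 * π * |w| := by
      simp only [norm_mul, Complex.norm_real, Real.norm_eq_abs, Complex.norm_I,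
        Complex.norm_ofNat, mul_one]
      rw [abs_of_pos hπ]
    rw [h2, hw, abs_div, abs_of_pos (by positivity : (0:ℝ) < 2 * π)]
    rw [abs_mul, abs_of_pos hω0]
    field_simp
  have heq : (ω * |c|) ^ k * ‖FourierTransform.fourier h w‖
      = ‖FourierTransform.fourier (iteratedDeriv k h) w‖ := by
    rw [hkey]
    simp only []
    rw [norm_smul, hwnorm]
  have hL1 : ‖FourierTransform.fourier (iteratedDeriv k h) w‖ ≤ ∫ t : ℝ, ‖iteratedDeriv k h t‖ :=
    VectorFourier.norm_fourierIntegral_le_integral_norm _ _ _ _ _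
  have hIcc : (∫ t : ℝ, ‖iteratedDeriv k h t‖) = ∫ t in Set.Icc (-R) R, ‖iteratedDeriv k h t‖ := by
    symm
    apply setIntegral_eq_integral_of_forall_compl_eq_zero
    intro t ht
    rw [hder t]
    have h0 : iteratedFDeriv ℝ k f (u + α * t, t) = 0 := by
      by_contra h0
      exact hsupp0 t ht (support_iteratedFDeriv_subset k (by simpa [Function.mem_support] using h0))
    simp [h0]
  have hvol : volume (Set.Icc (-R) R) < ⊤ := by
    rw [Real.volume_Icc]
    exact ENNReal.ofReal_lt_top
  have hK : (∫ t : ℝ, ‖iteratedDeriv k h t‖) ≤ 2 * R * (Ck * max M 1 ^ k) := by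
    rw [hIcc]
    have := norm_setIntegral_le_of_norm_le_const hvol
      (C := Ck * max M 1 ^ k) (f := fun t => ‖iteratedDeriv k h t‖)
      (fun t _ => by simpa using hbound t)
    have hle := le_trans (le_abs_self _) this
    rw [measureReal_def, Real.volume_Icc] at hle
    rw [ENNReal.toReal_ofReal (by linarith : (0:ℝ) ≤ R - -R)] at hle
    calc (∫ t in Set.Icc (-R) R, ‖iteratedDeriv k h t‖) ≤ Ck * max M 1 ^ k * (R - -R) := hle
      _ = 2 * R * (Ck * max M 1 ^ k) := by ring
  -- conclude
  rw [hFour, div_eq_mul_inv, ← div_eq_mul_inv, le_div_iff₀ (by positivity)]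
  have hmono : ‖FourierTransform.fourier h w‖ * (ω * δ) ^ k
      ≤ ‖FourierTransform.fourier h w‖ * (ω * |c|) ^ k := by
    apply mul_le_mul_of_nonneg_left _ (norm_nonneg _)
    apply pow_le_pow_left₀ (by positivity)
    exact mul_le_mul_of_nonneg_left hc (le_of_lt hω0)
  calc ‖FourierTransform.fourier h w‖ * (ω * δ) ^ k
      ≤ ‖FourierTransform.fourier h w‖ * (ω * |c|) ^ k := hmono
    _ = ‖FourierTransform.fourier (iteratedDeriv k h) w‖ := by rw [mul_comm]; exact heq
    _ ≤ ∫ t : ℝ, ‖iteratedDeriv k h t‖ := hL1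
    _ ≤ 2 * R * (Ck * max M 1 ^ k) := hK


lemma fubini_shear (ψ : ℝ × ℝ → ℝ) (hψ : Continuous ψ) (hψc : HasCompactSupport ψ)
    (φ : ℝ → ℝ) (hφ : Continuous φ)
    (A ξ₀ τ₀ ω ε : ℝ) :
    (∫ p : ℝ × ℝ, Complex.exp (-Complex.I * ω * (ξ₀ * p.1 + τ₀ * p.2)) *
        ((ψ p * (ε⁻¹ * φ ((p.1 - A * p.2) / ε)) : ℝ) : ℂ))
      = ∫ u : ℝ, ((ε⁻¹ * φ (u / ε) : ℝ) : ℂ) * Complex.exp (-Complex.I * ω * (ξ₀ * u)) *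
          ∫ t : ℝ, Complex.exp (-Complex.I * ω * ((τ₀ + A * ξ₀) * t)) * ((ψ (u + A * t, t) : ℝ) : ℂ) := by
  set f : ℝ × ℝ → ℂ := fun p => Complex.exp (-Complex.I * ω * (ξ₀ * p.1 + τ₀ * p.2)) *
        ((ψ p * (ε⁻¹ * φ ((p.1 - A * p.2) / ε)) : ℝ) : ℂ) with hf_def
  set g : ℝ × ℝ → ℂ := fun q => ((ε⁻¹ * φ (q.1 / ε) : ℝ) : ℂ) *
      Complex.exp (-Complex.I * ω * (ξ₀ * q.1)) *
      (Complex.exp (-Complex.I * ω * ((τ₀ + A * ξ₀) * q.2)) * ((ψ (q.1 + A * q.2, q.2) : ℝ) : ℂ))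
    with hg_def
  have hfcont : Continuous f := by
    apply Continuous.mul
    · exact Complex.continuous_exp.comp (by fun_prop)
    · exact Complex.continuous_ofReal.comp (by fun_prop)
  have hgcont : Continuous g := by
    apply Continuous.mul
    · apply Continuous.mul
      · exact Complex.continuous_ofReal.comp (by fun_prop)
      · exact Complex.continuous_exp.comp (by fun_prop)
    · apply Continuous.mul
      · exact Complex.continuous_exp.comp (by fun_prop)
      · exact Complex.continuous_ofReal.comp (by fun_prop)
  have hfK : HasCompactSupport f := by
    apply HasCompactSupport.intro hψc
    intro p hp
    simp [hf_def, image_eq_zero_of_notMem_tsupport hp]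
  have hgK : HasCompactSupport g := by
    have hS : Continuous (fun p : ℝ × ℝ => ((p.1 - A * p.2, p.2) : ℝ × ℝ)) := by fun_prop
    apply HasCompactSupport.intro (hψc.image hS)
    intro q hq
    have hz : ψ (q.1 + A * q.2, q.2) = 0 := by
      apply image_eq_zero_of_notMem_tsupport
      intro hmem
      apply hq
      refine ⟨(q.1 + A * q.2, q.2), hmem, ?_⟩
      simp [Prod.ext_iff]
    simp [hg_def, hz]
  have hfint : Integrable f := hfcont.integrable_of_hasCompactSupport hfK
  have hgint : Integrable g := hgcont.integrable_of_hasCompactSupport hgK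
  have hfg : ∀ t u : ℝ, f (u + A * t, t) = g (u, t) := by
    intro t u
    simp only [hf_def, hg_def]
    have h1 : u + A * t - A * t = u := by ring
    rw [h1]
    have harg : (-Complex.I * ω * (ξ₀ * (u + A * t) + τ₀ * t))
        = (-Complex.I * ω * (ξ₀ * u)) + (-Complex.I * ω * ((τ₀ + A * ξ₀) * t)) := by
      push_cast; ring
    push_cast
    rw [harg, Complex.exp_add]
    ring
  rw [Measure.volume_eq_prod] at hfint hgint
  calc (∫ p : ℝ × ℝ, f p) = ∫ x : ℝ, ∫ t : ℝ, f (x, t) := by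
        rw [Measure.volume_eq_prod]; exact integral_prod f hfint
    _ = ∫ t : ℝ, ∫ x : ℝ, f (x, t) := integral_integral_swap hfint
    _ = ∫ t : ℝ, ∫ u : ℝ, f (u + A * t, t) := by
        congr 1; funext t
        exact (integral_add_right_eq_self (fun x => f (x, t)) (A * t)).symm
    _ = ∫ t : ℝ, ∫ u : ℝ, g (u, t) := by
        congr 1; funext t; congr 1; funext u; exact hfg t u
    _ = ∫ u : ℝ, ∫ t : ℝ, g (u, t) := integral_integral_swap (hgint.swap)
    _ = ∫ u : ℝ, ((ε⁻¹ * φ (u / ε) : ℝ) : ℂ) * Complex.exp (-Complex.I * ω * (ξ₀ * u)) *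
          ∫ t : ℝ, Complex.exp (-Complex.I * ω * ((τ₀ + A * ξ₀) * t)) * ((ψ (u + A * t, t) : ℝ) : ℂ) := by
        congr 1; funext u
        simp only [hg_def]
        rw [integral_const_mul]


/--
Let `ψ ∈ C_c^∞(ℝ²)`, `φ ∈ C_c^∞(ℝ)`, let `(a_ε)_{ε∈(0,1]}` be a
bounded family of reals with limit point set `B` as `ε → 0`, and let
`(ξ₀,τ₀) ∈ ℝ² \ {0}` satisfy `τ₀ + b·ξ₀ ≠ 0` for all `b ∈ B`. Then for every `k ∈ ℕ`
there are `C > 0`, `η > 0` such that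
`|∫∫ e^{−iω(ξ₀x+τ₀t)} ψ(x,t) φ_ε(x − a_ε t) dx dt| ≤ C ω^{−k}`
for all `ω ≥ 1` and `0 < ε < η`, where `φ_ε(x) = ε⁻¹ φ(x/ε)`.
-/
theorem stmt12 (ψ : ℝ × ℝ → ℝ) (hψ : ContDiff ℝ (⊤ : ℕ∞) ψ) (hψc : HasCompactSupport ψ)
    (φ : ℝ → ℝ) (hφ : ContDiff ℝ (⊤ : ℕ∞) φ) (hφc : HasCompactSupport φ)
    (a : ℝ → ℝ)
    (hbound : ∃ C : ℝ, ∀ ε ∈ Set.Ioc (0 : ℝ) 1, |a ε| ≤ C)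
    (B : Set ℝ)
    (hB : B = {b | ∃ e : ℕ → ℝ, (∀ j, e j ∈ Set.Ioc (0 : ℝ) 1) ∧
      Tendsto e atTop (𝓝 0) ∧ Tendsto (fun j => a (e j)) atTop (𝓝 b)})
    (ξ₀ τ₀ : ℝ) (hne : (ξ₀, τ₀) ≠ (0, 0))
    (hchar : ∀ b ∈ B, τ₀ + b * ξ₀ ≠ 0) :
    ∀ k : ℕ, ∃ C : ℝ, 0 < C ∧ ∃ η : ℝ, 0 < η ∧
      ∀ ω : ℝ, 1 ≤ ω → ∀ ε : ℝ, 0 < ε → ε < η →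
        ‖∫ p : ℝ × ℝ, Complex.exp (-Complex.I * ω * (ξ₀ * p.1 + τ₀ * p.2)) *
            ((ψ p * (ε⁻¹ * φ ((p.1 - a ε * p.2) / ε)) : ℝ) : ℂ)‖ ≤ C * ω ^ (-(k : ℤ)) := by
  intro k
  -- bound for a
  obtain ⟨M₀, hM₀⟩ := hbound
  set M : ℝ := max M₀ 0 with hM_def
  have hM : ∀ ε ∈ Set.Ioc (0 : ℝ) 1, |a ε| ≤ M := fun ε hε => (hM₀ ε hε).trans (le_max_left _ _)
  -- uniform separation from the characteristic set
  have hsep : ∃ η δ : ℝ, 0 < η ∧ η ≤ 1 ∧ 0 < δ ∧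
      ∀ ε : ℝ, 0 < ε → ε < η → δ ≤ |τ₀ + a ε * ξ₀| := by
    by_contra hcon
    push_neg at hcon
    have hstep : ∀ n : ℕ, ∃ ε : ℝ, 0 < ε ∧ ε < 1 / (n + 1) ∧ |τ₀ + a ε * ξ₀| < 1 / (n + 1) := by
      intro n
      have h1 : (0:ℝ) < 1 / (n + 1) := by positivity
      have h2 : (1:ℝ) / (n + 1) ≤ 1 := by
        rw [div_le_one (by positivity)]
        simp
      exact hcon _ _ h1 h2 h1
    choose e he1 he2 he3 using hstep
    have hIoc : ∀ n, e n ∈ Set.Ioc (0:ℝ) 1 := by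
      intro n
      refine ⟨he1 n, le_of_lt ((he2 n).trans_le ?_)⟩
      rw [div_le_one (by positivity)]
      simp
    have htend : Tendsto (fun n : ℕ => 1 / ((n : ℝ) + 1)) atTop (𝓝 0) :=
      tendsto_one_div_add_atTop_nhds_zero_nat
    have he0 : Tendsto e atTop (𝓝 0) :=
      squeeze_zero (fun n => (he1 n).le) (fun n => (he2 n).le) htend
    obtain ⟨b, _, σ, hσ, hconv⟩ := isCompact_Icc.tendsto_subseq
      (x := fun n => a (e n)) (fun n => abs_le.1 (hM _ (hIoc n)))
    have hbB : b ∈ B := by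
      rw [hB]
      exact ⟨e ∘ σ, fun j => hIoc _, he0.comp hσ.tendsto_atTop, hconv⟩
    apply hchar b hbB
    have h1 : Tendsto (fun j => τ₀ + a (e (σ j)) * ξ₀) atTop (𝓝 (τ₀ + b * ξ₀)) :=
      ((hconv.mul_const ξ₀).const_add τ₀)
    have h2 : Tendsto (fun j => τ₀ + a (e (σ j)) * ξ₀) atTop (𝓝 0) := by
      rw [tendsto_zero_iff_norm_tendsto_zero]
      apply squeeze_zero (fun j => norm_nonneg _) (g := fun j : ℕ => 1 / ((j:ℝ) + 1)) _ htend
      intro j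
      refine le_trans (le_of_lt (he3 (σ j))) ?_
      apply div_le_div_of_nonneg_left one_pos.le (by positivity)
      have : (j:ℝ) ≤ (σ j : ℝ) := by exact_mod_cast hσ.le_apply
      linarith
    exact tendsto_nhds_unique h1 h2
  obtain ⟨η, δ, hη0, hη1, hδ0, hδ⟩ := hsep
  -- the complexified ψ
  set Ψ : ℝ × ℝ → ℂ := fun p => ((ψ p : ℝ) : ℂ) with hΨ_def
  have hΨ : ContDiff ℝ (⊤ : ℕ∞) Ψ := Complex.ofRealCLM.contDiff.comp hψ
  have hΨc : HasCompactSupport Ψ := hψc.comp_left (g := Complex.ofReal) Complex.ofReal_zero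
  have hΨsupp : tsupport Ψ ⊆ tsupport ψ :=
    closure_mono (Function.support_comp_subset Complex.ofReal_zero ψ)
  -- radius
  obtain ⟨r, hr⟩ := hψc.isBounded.subset_closedBall (0 : ℝ × ℝ)
  set R : ℝ := max r 1 with hR_def
  have hR0 : (0:ℝ) < R := lt_of_lt_of_le one_pos (le_max_right _ _)
  have hR : tsupport Ψ ⊆ Metric.closedBall 0 R :=
    hΨsupp.trans (hr.trans (Metric.closedBall_subset_closedBall (le_max_left _ _)))
  -- bound on iterated derivative of Ψ
  have hIcont : Continuous (iteratedFDeriv ℝ k Ψ) :=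
    hΨ.continuous_iteratedFDeriv (by exact_mod_cast le_top)
  have hIsupp : HasCompactSupport (iteratedFDeriv ℝ k Ψ) :=
    IsCompact.of_isClosed_subset hΨc (isClosed_tsupport _) (tsupport_iteratedFDeriv_subset k)
  obtain ⟨Ck, hCk⟩ := hIsupp.exists_bound_of_continuous hIcont
  have hCk0 : 0 ≤ Ck := le_trans (norm_nonneg _) (hCk 0)
  -- constants
  set Φ : ℝ := ∫ y : ℝ, |φ y| with hΦ_def
  have hΦ0 : 0 ≤ Φ := integral_nonneg (fun y => abs_nonneg _)
  set K : ℝ := 2 * R * (Ck * max M 1 ^ k) with hK_def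
  have hK0 : 0 ≤ K := by
    apply mul_nonneg (by linarith)
    exact mul_nonneg hCk0 (pow_nonneg (le_trans one_pos.le (le_max_right _ _)) k)
  refine ⟨Φ * K / δ ^ k + 1, by positivity, η, hη0, ?_⟩
  intro ω hω ε hε0 hεη
  have hω0 : (0:ℝ) < ω := lt_of_lt_of_le one_pos hω
  set A : ℝ := a ε with hA_def
  have hAM : |A| ≤ M := hM ε ⟨hε0, le_of_lt (lt_of_lt_of_le hεη hη1)⟩
  set c : ℝ := τ₀ + A * ξ₀ with hc_def
  have hcδ : δ ≤ |c| := hδ ε hε0 hεη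
  -- rewrite by Fubini + shear change of variables
  rw [fubini_shear ψ hψ.continuous hψc φ hφ.continuous A ξ₀ τ₀ ω ε]
  have hcc : ((τ₀ : ℂ) + (A : ℂ) * (ξ₀ : ℂ)) = (c : ℂ) := by rw [hc_def]; push_cast; ring
  simp only [hcc]
  -- the inner integral bound
  set D : ℝ := K / (ω * δ) ^ k with hD_def
  have hJ : ∀ u : ℝ,
      ‖∫ t : ℝ, Complex.exp (-Complex.I * ω * (c * t)) * ((ψ (u + A * t, t) : ℝ) : ℂ)‖ ≤ D :=
    fun u => osc_bound Ψ hΨ hΨc R hR0 hR k Ck hCk M u A hAM c δ hδ0 hcδ ω hω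
  have hD0 : 0 ≤ D := by
    apply div_nonneg hK0
    positivity
  -- dominating function
  set n : ℝ → ℝ := fun u => ‖((ε⁻¹ * φ (u / ε) : ℝ) : ℂ)‖ * D with hn_def
  have hncont : Continuous n := by
    apply Continuous.mul _ continuous_const
    exact (Complex.continuous_ofReal.comp
      (continuous_const.mul (hφ.continuous.comp (continuous_id.div_const ε)))).norm
  have hnK : HasCompactSupport n := by
    have hK : IsCompact ((fun y : ℝ => ε * y) '' tsupport φ) :=
      hφc.image (continuous_const.mul continuous_id)
    apply HasCompactSupport.intro hK
    intro u hu
    have hz : φ (u / ε) = 0 := by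
      apply image_eq_zero_of_notMem_tsupport
      intro hmem
      exact hu ⟨u / ε, hmem, by field_simp⟩
    simp [hn_def, hz]
  have hnint : Integrable n := hncont.integrable_of_hasCompactSupport hnK
  -- bound the integral
  have hmain : ‖∫ u : ℝ, ((ε⁻¹ * φ (u / ε) : ℝ) : ℂ) * Complex.exp (-Complex.I * ω * (ξ₀ * u)) *
        ∫ t : ℝ, Complex.exp (-Complex.I * ω * (c * t)) * ((ψ (u + A * t, t) : ℝ) : ℂ)‖
      ≤ ∫ u : ℝ, n u := by
    apply norm_integral_le_of_norm_le hnint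
    apply Filter.Eventually.of_forall
    intro u
    rw [norm_mul, norm_mul]
    have he1 : ‖Complex.exp (-Complex.I * ω * (ξ₀ * u))‖ = 1 := by
      rw [Complex.norm_exp]
      have : (-Complex.I * ω * (ξ₀ * u)).re = 0 := by simp
      rw [this, Real.exp_zero]
    rw [he1, mul_one]
    exact mul_le_mul_of_nonneg_left (hJ u) (norm_nonneg _)
  -- compute ∫ n
  have hnint_eq : (∫ u : ℝ, n u) = Φ * D := by
    simp only [hn_def, Complex.norm_real, Real.norm_eq_abs]
    rw [integral_mul_const]
    congr 1
    have : ∀ u : ℝ, |ε⁻¹ * φ (u / ε)| = ε⁻¹ * |φ (u / ε)| := by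
      intro u
      rw [abs_mul, abs_of_pos (inv_pos.2 hε0)]
    simp_rw [this]
    rw [integral_const_mul, MeasureTheory.Measure.integral_comp_div (fun y => |φ y|) ε]
    rw [smul_eq_mul, abs_of_pos hε0]
    rw [← mul_assoc, inv_mul_cancel₀ (ne_of_gt hε0), one_mul]
  -- conclude
  have hfinal : Φ * D ≤ (Φ * K / δ ^ k + 1) * ω ^ (-(k : ℤ)) := by
    have hzpow : (ω : ℝ) ^ (-(k : ℤ)) = (ω ^ k)⁻¹ := by
      rw [zpow_neg, zpow_natCast]
    rw [hzpow, hD_def, mul_pow]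
    have h1 : Φ * (K / (ω ^ k * δ ^ k)) = (Φ * K / δ ^ k) * (ω ^ k)⁻¹ := by
      rw [div_eq_mul_inv, div_eq_mul_inv, mul_inv]
      ring
    rw [h1]
    apply mul_le_mul_of_nonneg_right _ (by positivity)
    linarith
  calc ‖∫ u : ℝ, ((ε⁻¹ * φ (u / ε) : ℝ) : ℂ) * Complex.exp (-Complex.I * ω * (ξ₀ * u)) *
        ∫ t : ℝ, Complex.exp (-Complex.I * ω * (c * t)) * ((ψ (u + A * t, t) : ℝ) : ℂ)‖
      ≤ ∫ u : ℝ, n u := hmain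
    _ = Φ * D := hnint_eq
    _ ≤ (Φ * K / δ ^ k + 1) * ω ^ (-(k : ℤ)) := hfinal
end

section
/- Let ψ ∈ C_c^∞(ℝ²) and φ ∈ C_c^∞(ℝ) with ∫φ(x)dx = 1, let (a_ε)_{ε∈(0,1]} be a bounded family of real numbers, let b be a limit point of (a_ε) as ε → 0, and let (ε_k) be a sequence with ε_k → 0 and a_{ε_k} → b. Then for every fixed ξ ∈ ℝ, ∫∫ e^{−i(ξx − bξt)} ψ(x,t) φ_{ε_k}(x − a_{ε_k} t) dx dt → ∫ ψ(bt, t) dt as k → ∞. (Consequently, if ∫ψ(bt,t)dt ≠ 0, the Fourier transform of ψ·φ_ε(x − a_ε t) is not rapidly decreasing in the direction (ξ, −bξ), uniformly in ε.) -/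
open Filter Topology MeasureTheory

/--
Let `ψ ∈ C_c^∞(ℝ²)` and `φ ∈ C_c^∞(ℝ)` with `∫φ = 1`, let
`(a_ε)_{ε∈(0,1]}` be a bounded family of reals, let `b` be a limit point of `(a_ε)` as
`ε → 0` witnessed by a sequence `ε_k → 0` with `a_{ε_k} → b`. Then for every fixed
`ξ ∈ ℝ`,
`∫∫ e^{−i(ξx − bξt)} ψ(x,t) φ_{ε_k}(x − a_{ε_k} t) dx dt → ∫ ψ(bt,t) dt` as `k → ∞`.
-/
theorem stmt13 (ψ : ℝ × ℝ → ℝ) (hψ : ContDiff ℝ (⊤ : ℕ∞) ψ) (hψc : HasCompactSupport ψ)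
    (φ : ℝ → ℝ) (hφ : ContDiff ℝ (⊤ : ℕ∞) φ) (hφc : HasCompactSupport φ)
    (hφ1 : (∫ x : ℝ, φ x) = 1)
    (a : ℝ → ℝ)
    (hbound : ∃ C : ℝ, ∀ ε ∈ Set.Ioc (0 : ℝ) 1, |a ε| ≤ C)
    (b : ℝ) (e : ℕ → ℝ) (he : ∀ k, e k ∈ Set.Ioc (0 : ℝ) 1)
    (he0 : Tendsto e atTop (𝓝 0))
    (hab : Tendsto (fun k => a (e k)) atTop (𝓝 b)) :
    ∀ ξ : ℝ,
      Tendsto (fun k : ℕ =>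
          ∫ p : ℝ × ℝ, Complex.exp (-Complex.I * (ξ * p.1 - b * ξ * p.2)) *
            ((ψ p * ((e k)⁻¹ * φ ((p.1 - a (e k) * p.2) / e k)) : ℝ) : ℂ))
        atTop (𝓝 ((∫ t : ℝ, ψ (b * t, t) : ℝ) : ℂ)) := by
  intro ξ
  obtain ⟨M, hM⟩ := hψc.exists_bound_of_continuous hψ.continuous
  obtain ⟨R, hRsub⟩ := hψc.isBounded.subset_closedBall (0 : ℝ × ℝ)
  have hψ0 : ∀ x t : ℝ, R < |t| → ψ (x, t) = 0 := by
    intro x t ht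
    by_contra h
    have hmem : (x, t) ∈ tsupport ψ := subset_tsupport ψ h
    have h1 := hRsub hmem
    rw [Metric.mem_closedBall, dist_zero_right] at h1
    have h2 : |t| ≤ ‖(x, t)‖ := by
      rw [Prod.norm_def]
      simpa using le_max_right ‖x‖ ‖t‖
    linarith
  have heps : ∀ k, 0 < e k := fun k => (he k).1
  have hψC : Continuous ψ := hψ.continuous
  have hφC : Continuous φ := hφ.continuous
  have hnot : ∀ s : ℝ, s ∉ Set.Icc (-R) R → R < |s| := by
    intro s hs
    simp only [Set.mem_Icc, not_and_or, not_le] at hs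
    rcases hs with h | h
    · calc R < -s := by linarith
        _ ≤ |s| := neg_le_abs s
    · exact lt_of_lt_of_le h (le_abs_self s)
  set G : ℕ → ℝ × ℝ → ℂ := fun k q =>
    Complex.exp (-Complex.I * (ξ * (a (e k) * q.1 + e k * q.2) - b * ξ * q.1)) *
      ((ψ (a (e k) * q.1 + e k * q.2, q.1) * φ q.2 : ℝ) : ℂ) with hG
  set L : ℝ × ℝ → ℂ := fun q => ((ψ (b * q.1, q.1) * φ q.2 : ℝ) : ℂ) with hL
  have hGcont : ∀ k, Continuous (G k) := by
    intro k
    apply Continuous.mul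
    · exact Complex.continuous_exp.comp (by fun_prop)
    · refine Complex.continuous_ofReal.comp (Continuous.mul (hψC.comp ?_) (hφC.comp continuous_snd))
      fun_prop
  have hGsupp : ∀ k, HasCompactSupport (G k) := by
    intro k
    apply HasCompactSupport.intro ((isCompact_Icc (a := -R) (b := R)).prod hφc)
    intro q hq
    simp only [Set.mem_prod, not_and_or] at hq
    rcases hq with h | h
    · simp [hG, hψ0 _ _ (hnot _ h)]
    · simp [hG, image_eq_zero_of_notMem_tsupport h]
  have hGint : ∀ k, Integrable (G k) := fun k =>
    (hGcont k).integrable_of_hasCompactSupport (hGsupp k)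
  -- Step 1: change of variables
  have key : ∀ k, (∫ p : ℝ × ℝ, Complex.exp (-Complex.I * (ξ * p.1 - b * ξ * p.2)) *
            ((ψ p * ((e k)⁻¹ * φ ((p.1 - a (e k) * p.2) / e k)) : ℝ) : ℂ)) = ∫ q, G k q := by
    intro k
    have hek := heps k
    set f : ℝ × ℝ → ℂ := fun p => Complex.exp (-Complex.I * (ξ * p.1 - b * ξ * p.2)) *
            ((ψ p * ((e k)⁻¹ * φ ((p.1 - a (e k) * p.2) / e k)) : ℝ) : ℂ) with hf
    have hfcont : Continuous f := by
      apply Continuous.mul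
      · exact Complex.continuous_exp.comp (by fun_prop)
      · refine Complex.continuous_ofReal.comp (Continuous.mul hψC ?_)
        fun_prop
    have hfsupp : HasCompactSupport f := by
      apply HasCompactSupport.intro hψc
      intro p hp
      simp [hf, image_eq_zero_of_notMem_tsupport hp]
    have hfint : Integrable f := hfcont.integrable_of_hasCompactSupport hfsupp
    have hGint' := hGint k
    rw [Measure.volume_eq_prod ℝ ℝ] at hfint hGint'
    calc ∫ p : ℝ × ℝ, f p = ∫ p : ℝ × ℝ, f p ∂((volume : Measure ℝ).prod volume) := by
          rw [Measure.volume_eq_prod ℝ ℝ]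
      _ = ∫ t, ∫ x, f (x, t) := integral_prod_symm f hfint
      _ = ∫ t, ∫ y, G k (t, y) := by
          congr 1
          ext t
          have h1 : ∫ y : ℝ, f (a (e k) * t + e k * y, t)
              = |(e k)⁻¹| • ∫ x : ℝ, f (a (e k) * t + x, t) :=
            Measure.integral_comp_mul_left (fun u => f (a (e k) * t + u, t)) (e k)
          have h2 : ∫ x : ℝ, f (a (e k) * t + x, t) = ∫ x : ℝ, f (x, t) :=
            integral_add_left_eq_self (fun u => f (u, t)) (a (e k) * t)
          have h3 : ∀ y : ℝ, G k (t, y) = (e k) • f (a (e k) * t + e k * y, t) := by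
            intro y
            simp only [hG, hf]
            have harg : (a (e k) * t + e k * y - a (e k) * t) / e k = y := by
              field_simp
              ring
            rw [harg, Complex.real_smul]
            push_cast
            have hc : (e k : ℂ) ≠ 0 := by exact_mod_cast hek.ne'
            field_simp
          simp_rw [h3]
          rw [integral_smul, h1, h2, abs_of_pos (inv_pos.mpr hek), smul_smul,
            mul_inv_cancel₀ hek.ne', one_smul]
      _ = ∫ q : ℝ × ℝ, G k q ∂((volume : Measure ℝ).prod volume) :=
          (integral_prod (G k) hGint').symm
      _ = ∫ q, G k q := by rw [Measure.volume_eq_prod ℝ ℝ]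
  simp only [key]
  -- Step 2: dominated convergence
  have hlim : Tendsto (fun k => ∫ q, G k q) atTop (𝓝 (∫ q, L q)) := by
    apply tendsto_integral_of_dominated_convergence
      (fun q => Set.indicator (Set.Icc (-R) R) (fun _ => M) q.1 * |φ q.2|)
    · exact fun k => (hGcont k).aestronglyMeasurable
    · have hind : Integrable (fun t : ℝ => Set.indicator (Set.Icc (-R) R) (fun _ => M) t) := by
        have : IntegrableOn (fun _ : ℝ => M) (Set.Icc (-R) R) volume :=
          integrableOn_const measure_Icc_lt_top.ne
        exact this.integrable_indicator measurableSet_Icc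
      have habs : Integrable (fun y : ℝ => |φ y|) :=
        (hφ.continuous.integrable_of_hasCompactSupport hφc).abs
      rw [Measure.volume_eq_prod ℝ ℝ]
      exact hind.mul_prod habs
    · intro k
      filter_upwards with q
      simp only [hG]
      rw [norm_mul, Complex.norm_exp]
      have hre : (-Complex.I * (ξ * (a (e k) * q.1 + e k * q.2) - b * ξ * q.1)).re = 0 := by
        simp
      rw [hre, Real.exp_zero, one_mul, Complex.norm_real, Real.norm_eq_abs, abs_mul]
      by_cases hq : q.1 ∈ Set.Icc (-R) R
      · rw [Set.indicator_of_mem hq]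
        apply mul_le_mul_of_nonneg_right _ (abs_nonneg _)
        simpa using hM (a (e k) * q.1 + e k * q.2, q.1)
      · rw [Set.indicator_of_notMem hq, hψ0 _ _ (hnot _ hq)]
        simp
    · filter_upwards with q
      have hxt : Tendsto (fun k => a (e k) * q.1 + e k * q.2) atTop (𝓝 (b * q.1)) := by
        have := (hab.mul_const q.1).add (he0.mul_const q.2)
        simpa using this
      have hψt : Tendsto (fun k => ψ (a (e k) * q.1 + e k * q.2, q.1)) atTop
          (𝓝 (ψ (b * q.1, q.1))) :=
        (hψC.tendsto _).comp (hxt.prodMk_nhds tendsto_const_nhds)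
      have hexp : Tendsto (fun k => Complex.exp (-Complex.I *
          (ξ * (a (e k) * q.1 + e k * q.2) - b * ξ * q.1))) atTop (𝓝 1) := by
        have harg : Tendsto (fun k => -Complex.I *
            ((ξ : ℂ) * ((a (e k) * q.1 + e k * q.2 : ℝ) : ℂ) - b * ξ * q.1)) atTop (𝓝 0) := by
          have hc : Tendsto (fun k => ((a (e k) * q.1 + e k * q.2 : ℝ) : ℂ)) atTop
              (𝓝 ((b * q.1 : ℝ) : ℂ)) := (Complex.continuous_ofReal.tendsto _).comp hxt
          have h4 := (tendsto_const_nhds (x := -Complex.I)).mul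
            (((tendsto_const_nhds (x := (ξ : ℂ))).mul hc).sub
              (tendsto_const_nhds (x := ((b : ℂ) * ξ * q.1))))
          convert h4 using 2
          push_cast
          ring
        have := Complex.continuous_exp.tendsto 0 |>.comp harg
        simpa [Function.comp_def] using this
      have hmul : Tendsto (fun k => ((ψ (a (e k) * q.1 + e k * q.2, q.1) * φ q.2 : ℝ) : ℂ))
          atTop (𝓝 ((ψ (b * q.1, q.1) * φ q.2 : ℝ) : ℂ)) :=
        (Complex.continuous_ofReal.tendsto _).comp (hψt.mul_const _)
      have h5 := hexp.mul hmul
      rw [one_mul] at h5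
      simp only [hG, hL]
      exact h5
  -- Step 3: compute the limit integral
  have hLval : (∫ q, L q) = ((∫ t : ℝ, ψ (b * t, t) : ℝ) : ℂ) := by
    have h6 : (∫ q : ℝ × ℝ, L q) = ((∫ q : ℝ × ℝ, ψ (b * q.1, q.1) * φ q.2 : ℝ) : ℂ) := by
      simp only [hL]
      exact integral_ofReal
    have h7 : (∫ q : ℝ × ℝ, ψ (b * q.1, q.1) * φ q.2) = ∫ t : ℝ, ψ (b * t, t) := by
      rw [Measure.volume_eq_prod ℝ ℝ, integral_prod_mul (fun t => ψ (b * t, t)) φ, hφ1,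
        mul_one]
    rw [h6, h7]
  rw [← hLval]
  exact hlim
end

section
/- Let g, φ ∈ C_c^∞(ℝ) and denote by ĝ and φ̂ their Fourier transforms, ĝ(η) = ∫ e^{−iyη} g(y) dy. Then for every l ∈ ℕ there exists C > 0 such that |∫₀^∞ ĝ(η − η′) e^{iη′√ε x} φ̂(εη′) dη′| ≤ C (1 + |η|)^{−l} for all η < 0, all x ∈ ℝ and all ε ∈ (0,1]. -/
open MeasureTheory

open Real FourierTransform in
lemma stmt14_decay (G : ℝ → ℂ) (hG : ContDiff ℝ (⊤ : ℕ∞) G) (hGc : HasCompactSupport G) (k : ℕ) :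
    ∃ C : ℝ, 0 ≤ C ∧ ∀ t : ℝ, (1 + |t|) ^ k * ‖𝓕 G t‖ ≤ C := by
  have hG' : ContDiff ℝ ((⊤:ℕ∞) : WithTop ℕ∞) G := hG.of_le (by simp)
  have hint : ∀ n : ℕ, (n : ℕ∞) ≤ (⊤ : ℕ∞) → Integrable (iteratedDeriv n G) := by
    intro n _
    have hc : Continuous (iteratedDeriv n G) := by
      rw [iteratedDeriv_eq_equiv_comp]
      exact (LinearIsometryEquiv.continuous _).comp (hG.continuous_iteratedFDeriv (by exact_mod_cast le_top))
    have hcs : HasCompactSupport (iteratedDeriv n G) := by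
      rw [iteratedDeriv_eq_equiv_comp]
      exact (hGc.iteratedFDeriv n).comp_left (map_zero _)
    exact hc.integrable_of_hasCompactSupport hcs
  have key : ∀ n : ℕ, ∀ t : ℝ, (2 * π * |t|) ^ n * ‖𝓕 G t‖
      ≤ ∫ x, ‖iteratedDeriv n G x‖ := by
    intro n t
    have h := Real.fourier_iteratedDeriv hG' hint (le_top : (n : ℕ∞) ≤ ⊤)
    have h2 : ‖𝓕 (iteratedDeriv n G) t‖ ≤ ∫ x, ‖iteratedDeriv n G x‖ :=
      VectorFourier.norm_fourierIntegral_le_integral_norm _ _ _ _ _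
    rw [h] at h2
    simpa [norm_smul, norm_pow, abs_of_pos pi_pos, mul_pow,
      abs_of_nonneg pi_pos.le] using h2
  set A : ℕ → ℝ := fun n => ∫ x, ‖iteratedDeriv n G x‖ with hA
  have hA0 : ∀ n, 0 ≤ A n := fun n => integral_nonneg (fun x => norm_nonneg _)
  have h2pi : (1:ℝ) ≤ 2 * π := by nlinarith [pi_gt_three]
  refine ⟨2 ^ k * (A 0 + A k), by positivity, fun t => ?_⟩
  have hf0 : ‖𝓕 G t‖ ≤ A 0 := by simpa [hA] using key 0 t
  have hfk : |t| ^ k * ‖𝓕 G t‖ ≤ A k := by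
    calc |t| ^ k * ‖𝓕 G t‖ ≤ (2 * π * |t|) ^ k * ‖𝓕 G t‖ := by
          apply mul_le_mul_of_nonneg_right _ (norm_nonneg _)
          apply pow_le_pow_left₀ (abs_nonneg t)
          nlinarith [abs_nonneg t]
      _ ≤ A k := key k t
  have hpow : (1 + |t|) ^ k ≤ 2 ^ k * (1 + |t| ^ k) := by
    rcases le_total (|t|) 1 with h | h
    · calc (1 + |t|) ^ k ≤ 2 ^ k := pow_le_pow_left₀ (by positivity) (by linarith) k
        _ ≤ 2 ^ k * (1 + |t| ^ k) := by
            nlinarith [pow_pos (show (0:ℝ) < 2 by norm_num) k,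
              pow_nonneg (abs_nonneg t) k]
    · calc (1 + |t|) ^ k ≤ (2 * |t|) ^ k := pow_le_pow_left₀ (by positivity) (by linarith) k
        _ = 2 ^ k * |t| ^ k := mul_pow 2 _ k
        _ ≤ 2 ^ k * (1 + |t| ^ k) := by
            nlinarith [pow_pos (show (0:ℝ) < 2 by norm_num) k]
  calc (1 + |t|) ^ k * ‖𝓕 G t‖ ≤ (2 ^ k * (1 + |t| ^ k)) * ‖𝓕 G t‖ :=
        mul_le_mul_of_nonneg_right hpow (norm_nonneg _)
    _ = 2 ^ k * (‖𝓕 G t‖ + |t| ^ k * ‖𝓕 G t‖) := by ring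
    _ ≤ 2 ^ k * (A 0 + A k) := by
        apply mul_le_mul_of_nonneg_left _ (by positivity)
        exact add_le_add hf0 hfk

open Real FourierTransform in
lemma stmt14_conv (g : ℝ → ℝ) (ghat : ℝ → ℂ)
    (hghat : ∀ η : ℝ, ghat η = ∫ y : ℝ, Complex.exp (-Complex.I * y * η) * (g y : ℂ)) (t : ℝ) :
    ghat t = 𝓕 (fun y : ℝ => (g y : ℂ)) (t / (2 * π)) := by
  rw [hghat, Real.fourier_real_eq_integral_exp_smul]
  congr 1
  ext y
  rw [smul_eq_mul]
  congr 1
  have h2 : (-2 * π * y * (t / (2 * π)) : ℝ) = -(y * t) := by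
    field_simp
  rw [h2]
  push_cast
  ring

/--
Let `g, φ ∈ C_c^∞(ℝ)` with Fourier transforms
`ĝ(η) = ∫ e^{−iyη} g(y) dy`, `φ̂`. Then for every `l ∈ ℕ` there is `C > 0` such that
`|∫₀^∞ ĝ(η − η′) e^{iη′√ε x} φ̂(εη′) dη′| ≤ C (1+|η|)^{−l}`
for all `η < 0`, all `x ∈ ℝ` and all `ε ∈ (0,1]`.
-/
theorem stmt14 (g φ : ℝ → ℝ)
    (hg : ContDiff ℝ (⊤ : ℕ∞) g) (hgc : HasCompactSupport g)
    (hφ : ContDiff ℝ (⊤ : ℕ∞) φ) (hφc : HasCompactSupport φ)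
    (ghat φhat : ℝ → ℂ)
    (hghat : ∀ η : ℝ, ghat η = ∫ y : ℝ, Complex.exp (-Complex.I * y * η) * (g y : ℂ))
    (hφhat : ∀ η : ℝ, φhat η = ∫ y : ℝ, Complex.exp (-Complex.I * y * η) * (φ y : ℂ)) :
    ∀ l : ℕ, ∃ C : ℝ, 0 < C ∧
      ∀ η : ℝ, η < 0 → ∀ x : ℝ, ∀ ε ∈ Set.Ioc (0 : ℝ) 1,
        ‖∫ η' in Set.Ioi (0 : ℝ),
            ghat (η - η') * Complex.exp (Complex.I * η' * Real.sqrt ε * x) * φhat (ε * η')‖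
          ≤ C * (1 + |η|) ^ (-(l : ℤ)) := by
  intro l
  have hGsm : ContDiff ℝ (⊤ : ℕ∞) (fun y : ℝ => (g y : ℂ)) := Complex.ofRealCLM.contDiff.comp hg
  have hGc : HasCompactSupport (fun y : ℝ => (g y : ℂ)) :=
    hgc.comp_left (g := fun r : ℝ => (r : ℂ)) Complex.ofReal_zero
  obtain ⟨D, hD0, hDec⟩ := stmt14_decay _ hGsm hGc (l + 2)
  have h2pi : (1:ℝ) ≤ 2 * Real.pi := by nlinarith [Real.pi_gt_three]
  set D' : ℝ := (2 * Real.pi) ^ (l + 2) * D with hD'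
  have hD'0 : 0 ≤ D' := by positivity
  -- decay of ghat
  have hgdec : ∀ t : ℝ, (1 + |t|) ^ (l + 2) * ‖ghat t‖ ≤ D' := by
    intro t
    rw [stmt14_conv g ghat hghat t]
    have h1 : (1 + |t|) ≤ (2 * Real.pi) * (1 + |t / (2 * Real.pi)|) := by
      rw [abs_div, abs_of_pos Real.two_pi_pos]
      have : (2 * Real.pi) * (1 + |t| / (2 * Real.pi)) = 2 * Real.pi + |t| := by
        field_simp
      rw [this]; linarith
    calc (1 + |t|) ^ (l + 2) * ‖_‖
        ≤ ((2 * Real.pi) * (1 + |t / (2 * Real.pi)|)) ^ (l + 2) * ‖_‖ :=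
          mul_le_mul_of_nonneg_right (pow_le_pow_left₀ (by positivity) h1 _) (norm_nonneg _)
      _ = (2 * Real.pi) ^ (l + 2) * ((1 + |t / (2 * Real.pi)|) ^ (l + 2) * ‖_‖) := by
          rw [mul_pow]; ring
      _ ≤ (2 * Real.pi) ^ (l + 2) * D :=
          mul_le_mul_of_nonneg_left (hDec _) (by positivity)
  -- bound for φhat
  set M : ℝ := ∫ y, |φ y| with hM
  have hM0 : 0 ≤ M := integral_nonneg fun y => abs_nonneg _
  have hφb : ∀ t : ℝ, ‖φhat t‖ ≤ M := by
    intro t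
    rw [hφhat]
    refine (norm_integral_le_integral_norm _).trans_eq ?_
    congr 1; ext y
    rw [norm_mul]
    have h1 : ‖Complex.exp (-Complex.I * y * t)‖ = 1 := by
      rw [show -Complex.I * (y:ℂ) * (t:ℂ) = ((-(y * t) : ℝ) : ℂ) * Complex.I by
        push_cast; ring]
      exact Complex.norm_exp_ofReal_mul_I _
    rw [h1, one_mul, Complex.norm_real, Real.norm_eq_abs]
  refine ⟨D' * M * Real.pi + 1, by positivity, ?_⟩
  intro η hη x ε hε
  set K : ℝ := D' * M * ((1 + |η|) ^ l)⁻¹ with hK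
  have hη1 : (0:ℝ) < (1 + |η|) ^ l := by positivity
  have hK0 : 0 ≤ K := by positivity
  -- pointwise bound on the integrand
  have hb : ∀ η' ∈ Set.Ioi (0:ℝ),
      ‖ghat (η - η') * Complex.exp (Complex.I * η' * Real.sqrt ε * x) * φhat (ε * η')‖
        ≤ K * ((1:ℝ) + η' ^ 2)⁻¹ := by
    intro η' hη'
    have hη'0 : 0 < η' := hη'
    rw [norm_mul, norm_mul]
    have hexp : ‖Complex.exp (Complex.I * η' * Real.sqrt ε * x)‖ = 1 := by
      rw [show Complex.I * (η':ℂ) * (Real.sqrt ε : ℂ) * (x:ℂ)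
          = ((η' * Real.sqrt ε * x : ℝ) : ℂ) * Complex.I by push_cast; ring]
      exact Complex.norm_exp_ofReal_mul_I _
    rw [hexp, mul_one]
    have habs : |η - η'| = |η| + η' := by
      rw [abs_of_neg (by linarith : η - η' < 0), abs_of_neg hη]; ring
    have hkey : (1 + |η|) ^ l * (1 + η' ^ 2) ≤ (1 + |η - η'|) ^ (l + 2) := by
      rw [habs, pow_add]
      have p1 : (1 + |η|) ^ l ≤ (1 + (|η| + η')) ^ l :=
        pow_le_pow_left₀ (by positivity) (by linarith) l
      have p2 : 1 + η' ^ 2 ≤ (1 + (|η| + η')) ^ 2 := by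
        nlinarith [abs_nonneg η]
      exact mul_le_mul p1 p2 (by positivity) (by positivity)
    have hprod : ‖ghat (η - η')‖ ≤ D' * ((1 + |η|) ^ l * (1 + η' ^ 2))⁻¹ := by
      rw [← div_eq_mul_inv, le_div_iff₀ (by positivity)]
      calc ‖ghat (η - η')‖ * ((1 + |η|) ^ l * (1 + η' ^ 2))
          ≤ ‖ghat (η - η')‖ * (1 + |η - η'|) ^ (l + 2) :=
            mul_le_mul_of_nonneg_left hkey (norm_nonneg _)
        _ ≤ D' := by rw [mul_comm]; exact hgdec (η - η')
    calc ‖ghat (η - η')‖ * ‖φhat (ε * η')‖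
        ≤ (D' * ((1 + |η|) ^ l * (1 + η' ^ 2))⁻¹) * M :=
          mul_le_mul hprod (hφb _) (norm_nonneg _) (by positivity)
      _ = K * ((1:ℝ) + η' ^ 2)⁻¹ := by
          rw [hK, mul_inv]; ring
  -- integrate the bound
  have hIb : Integrable (fun η' : ℝ => K * ((1:ℝ) + η' ^ 2)⁻¹)
      (volume.restrict (Set.Ioi (0:ℝ))) :=
    (integrable_inv_one_add_sq.restrict).const_mul K
  have hnorm : ‖∫ η' in Set.Ioi (0:ℝ),
      ghat (η - η') * Complex.exp (Complex.I * η' * Real.sqrt ε * x) * φhat (ε * η')‖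
      ≤ ∫ η' in Set.Ioi (0:ℝ), K * ((1:ℝ) + η' ^ 2)⁻¹ := by
    refine norm_integral_le_of_norm_le hIb ?_
    filter_upwards [ae_restrict_mem measurableSet_Ioi] with η' hη' using hb η' hη'
  have hle : ∫ η' in Set.Ioi (0:ℝ), ((1:ℝ) + η' ^ 2)⁻¹ ≤ Real.pi := by
    rw [← integral_univ_inv_one_add_sq]
    exact setIntegral_le_integral integrable_inv_one_add_sq
      (ae_of_all _ fun x => by positivity)
  have hfin : ∫ η' in Set.Ioi (0:ℝ), K * ((1:ℝ) + η' ^ 2)⁻¹ ≤ K * Real.pi := by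
    rw [MeasureTheory.integral_const_mul]
    exact mul_le_mul_of_nonneg_left hle hK0
  have hzpow : ((1 + |η|) : ℝ) ^ (-(l : ℤ)) = ((1 + |η|) ^ l)⁻¹ := by
    rw [zpow_neg, zpow_natCast]
  rw [hzpow]
  calc ‖_‖ ≤ K * Real.pi := hnorm.trans hfin
    _ = (D' * M * Real.pi) * ((1 + |η|) ^ l)⁻¹ := by rw [hK]; ring
    _ ≤ (D' * M * Real.pi + 1) * ((1 + |η|) ^ l)⁻¹ := by
        apply mul_le_mul_of_nonneg_right _ (by positivity)
        linarith
end

section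
/- Let φ ∈ C_c^∞(ℝ) with ∫φ(x)dx = 1 and let g ∈ C_c^∞(ℝ). For ε ∈ (0,1] set φ_ε(x) = ε^{−1}φ(x/ε), u_ε(x,y) = φ_ε(x − √ε·y) and v_ε(x,y) = φ_ε(x + √ε·y). Then for every (ξ,η) ∈ ℝ²: lim_{ε→0} √ε · ∫∫ e^{−i(xξ + yη)} g(y)² u_ε(x,y) v_ε(x,y) dx dy = g(0)²/2. In particular, if g(0) ≠ 0, the Fourier transform of g²u_εv_ε is of exact order ε^{−1/2} in every direction (ξ,η), hence not rapidly decreasing in any direction uniformly in ε. -/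
open Filter Topology MeasureTheory

lemma prod_ofReal_smul_vol {a b : ℝ} (ha : 0 ≤ a) :
    ((ENNReal.ofReal a • (volume : Measure ℝ)).prod (ENNReal.ofReal b • (volume : Measure ℝ)))
      = ENNReal.ofReal (a * b) • ((volume : Measure ℝ).prod volume) := by
  have h1 : (ENNReal.ofReal a) • (volume : Measure ℝ) = a.toNNReal • (volume : Measure ℝ) := by
    ext s hs; simp only [Measure.smul_apply, ENNReal.smul_def]; rfl
  have h2 : (ENNReal.ofReal b) • (volume : Measure ℝ) = b.toNNReal • (volume : Measure ℝ) := by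
    ext s hs; simp only [Measure.smul_apply, ENNReal.smul_def]; rfl
  haveI : SigmaFinite ((ENNReal.ofReal a) • (volume : Measure ℝ)) := by rw [h1]; infer_instance
  haveI : SigmaFinite ((ENNReal.ofReal b) • (volume : Measure ℝ)) := by rw [h2]; infer_instance
  refine Measure.prod_eq fun s t hs ht => ?_
  simp only [Measure.smul_apply, Measure.prod_prod, smul_eq_mul, ENNReal.ofReal_mul ha]
  ring


private lemma stmt15_cross_support (φ : ℝ → ℝ) (hφc : HasCompactSupport φ) :
    HasCompactSupport (fun q : ℝ × ℝ => φ (q.1 - q.2) * φ (q.1 + q.2)) := by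
  obtain ⟨B, hB⟩ := hφc.isBounded.subset_closedBall 0
  have hφ0 : ∀ z : ℝ, B < |z| → φ z = 0 := by
    intro z hz
    apply image_eq_zero_of_notMem_tsupport
    intro hmem
    have := hB hmem
    rw [Metric.mem_closedBall, Real.dist_eq, sub_zero] at this
    linarith
  apply HasCompactSupport.intro
    ((isCompact_closedBall (0:ℝ) B).prod (isCompact_closedBall (0:ℝ) B))
  intro q hq
  rcases le_or_gt |q.1 - q.2| B with h1 | h1
  · rcases le_or_gt |q.1 + q.2| B with h2 | h2
    · exfalso
      apply hq
      have h1' := abs_le.mp h1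
      have h2' := abs_le.mp h2
      constructor <;>
        · rw [Metric.mem_closedBall, Real.dist_eq, sub_zero, abs_le]
          constructor <;> linarith [h1'.1, h1'.2, h2'.1, h2'.2]
    · simp [hφ0 _ h2]
  · simp [hφ0 _ h1]

private lemma stmt15_cross_integral (φ : ℝ → ℝ) (hφcont : Continuous φ)
    (hφc : HasCompactSupport φ) (hφ1 : (∫ x : ℝ, φ x) = 1) :
    (∫ q : ℝ × ℝ, φ (q.1 - q.2) * φ (q.1 + q.2)) = 1 / 2 := by
  obtain ⟨B, hB⟩ := hφc.isBounded.subset_closedBall 0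
  have hφ0 : ∀ z : ℝ, B < |z| → φ z = 0 := by
    intro z hz
    apply image_eq_zero_of_notMem_tsupport
    intro hmem
    have := hB hmem
    rw [Metric.mem_closedBall, Real.dist_eq, sub_zero] at this
    linarith
  set F2 : ℝ × ℝ → ℝ := fun q => φ (q.1 - q.2) * φ (q.1 + q.2) with hF2
  set F3 : ℝ × ℝ → ℝ := fun q => φ q.1 * φ (q.1 + 2 * q.2) with hF3
  have hF2cont : Continuous F2 :=
    (hφcont.comp (continuous_fst.sub continuous_snd)).mul
      (hφcont.comp (continuous_fst.add continuous_snd))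
  have hF3cont : Continuous F3 :=
    (hφcont.comp continuous_fst).mul
      (hφcont.comp (continuous_fst.add (continuous_const.mul continuous_snd)))
  have hF2c : HasCompactSupport F2 := by
    apply HasCompactSupport.intro
      ((isCompact_closedBall (0:ℝ) B).prod (isCompact_closedBall (0:ℝ) B))
    intro q hq
    rcases le_or_gt |q.1 - q.2| B with h1 | h1
    · rcases le_or_gt |q.1 + q.2| B with h2 | h2
      · exfalso
        apply hq
        have h1' := abs_le.mp h1
        have h2' := abs_le.mp h2
        constructor <;>
          · rw [Metric.mem_closedBall, Real.dist_eq, sub_zero, abs_le]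
            constructor <;> linarith [h1'.1, h1'.2, h2'.1, h2'.2]
      · simp [hF2, hφ0 _ h2]
    · simp [hF2, hφ0 _ h1]
  have hF3c : HasCompactSupport F3 := by
    apply HasCompactSupport.intro
      ((isCompact_closedBall (0:ℝ) B).prod (isCompact_closedBall (0:ℝ) B))
    intro q hq
    rcases le_or_gt |q.1| B with h1 | h1
    · rcases le_or_gt |q.1 + 2 * q.2| B with h2 | h2
      · exfalso
        apply hq
        have h1' := abs_le.mp h1
        have h2' := abs_le.mp h2
        constructor <;>
          · rw [Metric.mem_closedBall, Real.dist_eq, sub_zero, abs_le]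
            constructor <;> linarith [h1'.1, h1'.2, h2'.1, h2'.2]
      · simp [hF3, hφ0 _ h2]
    · simp [hF3, hφ0 _ h1]
  have hF2int : Integrable F2 ((volume : Measure ℝ).prod volume) := by
    rw [← MeasureTheory.Measure.volume_eq_prod]
    exact hF2cont.integrable_of_hasCompactSupport hF2c
  have hF3int : Integrable F3 ((volume : Measure ℝ).prod volume) := by
    rw [← MeasureTheory.Measure.volume_eq_prod]
    exact hF3cont.integrable_of_hasCompactSupport hF3c
  have e1 : (∫ q : ℝ × ℝ, F2 q) = ∫ q : ℝ × ℝ, F2 q ∂((volume : Measure ℝ).prod volume) := by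
    rw [← MeasureTheory.Measure.volume_eq_prod]
  rw [e1, MeasureTheory.integral_prod_symm F2 hF2int]
  have inner1 : ∀ w : ℝ, (∫ t : ℝ, F2 (t, w)) = ∫ s : ℝ, φ s * φ (s + 2 * w) := by
    intro w
    have := MeasureTheory.integral_sub_right_eq_self (μ := (volume : Measure ℝ))
      (fun s => φ s * φ (s + 2 * w)) w
    rw [← this]
    congr 1
    ext t
    simp only [hF2]
    ring_nf
  simp only [inner1]
  have e2 : (∫ w : ℝ, ∫ s : ℝ, φ s * φ (s + 2 * w))
      = ∫ q : ℝ × ℝ, F3 q ∂((volume : Measure ℝ).prod volume) := by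
    rw [MeasureTheory.integral_prod_symm F3 hF3int]
  rw [e2, MeasureTheory.integral_prod F3 hF3int]
  have inner2 : ∀ s : ℝ, (∫ w : ℝ, F3 (s, w)) = φ s * (1 / 2) := by
    intro s
    simp only [hF3]
    rw [MeasureTheory.integral_const_mul]
    congr 1
    have h2 : (∫ w : ℝ, φ (s + 2 * w)) = ∫ w : ℝ, (fun u => φ (u + s)) (2 * w) := by
      congr 1; ext w; ring_nf
    rw [h2, MeasureTheory.Measure.integral_comp_mul_left (fun u => φ (u + s)) 2,
      MeasureTheory.integral_add_right_eq_self φ s, hφ1]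
    norm_num
  simp only [inner2]
  rw [MeasureTheory.integral_mul_const, hφ1, one_mul]


/--
Let `φ ∈ C_c^∞(ℝ)` with `∫φ = 1` and `g ∈ C_c^∞(ℝ)`. For
`ε ∈ (0,1]` set `φ_ε(x) = ε⁻¹φ(x/ε)`, `u_ε(x,y) = φ_ε(x − √ε·y)`,
`v_ε(x,y) = φ_ε(x + √ε·y)`. Then for every `(ξ,η) ∈ ℝ²`:
`lim_{ε→0⁺} √ε · ∫∫ e^{−i(xξ+yη)} g(y)² u_ε(x,y) v_ε(x,y) dx dy = g(0)²/2`.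
-/
theorem stmt15 (φ g : ℝ → ℝ)
    (hφ : ContDiff ℝ (⊤ : ℕ∞) φ) (hφc : HasCompactSupport φ) (hφ1 : (∫ x : ℝ, φ x) = 1)
    (hg : ContDiff ℝ (⊤ : ℕ∞) g) (hgc : HasCompactSupport g) :
    ∀ ξ η : ℝ,
      Tendsto (fun ε : ℝ =>
          (Real.sqrt ε : ℂ) *
            ∫ p : ℝ × ℝ, Complex.exp (-Complex.I * (p.1 * ξ + p.2 * η)) *
              (((g p.2) ^ 2 * (ε⁻¹ * φ ((p.1 - Real.sqrt ε * p.2) / ε)) *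
                (ε⁻¹ * φ ((p.1 + Real.sqrt ε * p.2) / ε)) : ℝ) : ℂ))
        (𝓝[>] (0 : ℝ)) (𝓝 (((g 0) ^ 2 / 2 : ℝ) : ℂ)) := by
  intro ξ η
  have hφcont : Continuous φ := hφ.continuous
  have hgcont : Continuous g := hg.continuous
  set F2 : ℝ × ℝ → ℝ := fun q => φ (q.1 - q.2) * φ (q.1 + q.2) with hF2
  have hF2c : HasCompactSupport F2 := stmt15_cross_support φ hφc
  have crossInt : (∫ q : ℝ × ℝ, F2 q) = 1 / 2 := stmt15_cross_integral φ hφcont hφc hφ1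
  have hF2cont : Continuous F2 :=
    (hφcont.comp (continuous_fst.sub continuous_snd)).mul
      (hφcont.comp (continuous_fst.add continuous_snd))
  have hF2int : Integrable F2 := hF2cont.integrable_of_hasCompactSupport hF2c
  -- the main functions
  set F : ℝ → ℝ × ℝ → ℂ := fun ε p =>
    Complex.exp (-Complex.I * (p.1 * ξ + p.2 * η)) *
      (((g p.2) ^ 2 * (ε⁻¹ * φ ((p.1 - Real.sqrt ε * p.2) / ε)) *
        (ε⁻¹ * φ ((p.1 + Real.sqrt ε * p.2) / ε)) : ℝ) : ℂ) with hF
  set G : ℝ → ℝ × ℝ → ℂ := fun ε q =>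
    Complex.exp (((ε * q.1 * ξ + Real.sqrt ε * q.2 * η : ℝ) : ℂ) * (-Complex.I)) *
      (((g (Real.sqrt ε * q.2)) ^ 2 * F2 q : ℝ) : ℂ) with hG
  -- Step A : change of variables
  have stepA : ∀ ε : ℝ, 0 < ε →
      (Real.sqrt ε : ℂ) * (∫ p : ℝ × ℝ, F ε p) = ∫ q : ℝ × ℝ, G ε q := by
    intro ε hε
    have hε' : ε ≠ 0 := ne_of_gt hε
    have hsε : 0 < Real.sqrt ε := Real.sqrt_pos.mpr hε
    have hsε' : Real.sqrt ε ≠ 0 := ne_of_gt hsε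
    have hss : Real.sqrt ε * Real.sqrt ε = ε := Real.mul_self_sqrt hε.le
    set e : ℝ × ℝ → ℝ × ℝ := Prod.map (fun t => ε * t) (fun w => Real.sqrt ε * w) with he
    have hem : Measurable e := Measurable.prodMap (measurable_const_mul ε) (measurable_const_mul _)
    have hmap : Measure.map e (volume : Measure (ℝ × ℝ))
        = ENNReal.ofReal (ε⁻¹ * (Real.sqrt ε)⁻¹) • (volume : Measure (ℝ × ℝ)) := by
      rw [MeasureTheory.Measure.volume_eq_prod, he,
        ← MeasureTheory.Measure.map_prod_map _ _ (measurable_const_mul ε)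
          (measurable_const_mul (Real.sqrt ε)),
        Real.map_volume_mul_left hε', Real.map_volume_mul_left hsε',
        abs_of_nonneg (inv_nonneg.mpr hε.le), abs_of_nonneg (inv_nonneg.mpr hsε.le),
        prod_ofReal_smul_vol (inv_nonneg.mpr hε.le)]
    have hFcont : Continuous (F ε) := by
      apply Continuous.mul
      · apply Complex.continuous_exp.comp
        apply Continuous.mul continuous_const
        apply Continuous.add
        · exact (Complex.continuous_ofReal.comp continuous_fst).mul continuous_const
        · exact (Complex.continuous_ofReal.comp continuous_snd).mul continuous_const
      · apply Complex.continuous_ofReal.comp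
        apply Continuous.mul
        apply Continuous.mul
        · exact (hgcont.comp continuous_snd).pow 2
        · exact continuous_const.mul (hφcont.comp
            ((continuous_fst.sub (continuous_const.mul continuous_snd)).div_const ε))
        · exact continuous_const.mul (hφcont.comp
            ((continuous_fst.add (continuous_const.mul continuous_snd)).div_const ε))
    have h1 : (∫ q : ℝ × ℝ, F ε (e q)) = (ε⁻¹ * (Real.sqrt ε)⁻¹) • ∫ p : ℝ × ℝ, F ε p := by
      rw [← MeasureTheory.integral_map hem.aemeasurable hFcont.aestronglyMeasurable, hmap,
        MeasureTheory.integral_smul_measure,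
        ENNReal.toReal_ofReal (by positivity)]
    have h2 : ∀ q : ℝ × ℝ, F ε (e q) = (((ε⁻¹ * ε⁻¹ : ℝ)) : ℂ) * G ε q := by
      intro q
      obtain ⟨t, w⟩ := q
      have ha : (ε * t - Real.sqrt ε * (Real.sqrt ε * w)) / ε = t - w := by
        rw [← mul_assoc, hss]; field_simp
      have hb : (ε * t + Real.sqrt ε * (Real.sqrt ε * w)) / ε = t + w := by
        rw [← mul_assoc, hss]; field_simp
      simp only [hF, hG, he, Prod.map_apply]
      rw [ha, hb]
      have hexp : (-Complex.I * (((ε * t : ℝ) : ℂ) * (ξ:ℝ) + ((Real.sqrt ε * w : ℝ) : ℂ) * (η:ℝ)))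
          = ((ε * t * ξ + Real.sqrt ε * w * η : ℝ) : ℂ) * (-Complex.I) := by
        push_cast; ring
      rw [hexp]
      simp only [hF2]
      push_cast
      ring
    have h3 : (∫ q : ℝ × ℝ, F ε (e q)) = (((ε⁻¹ * ε⁻¹ : ℝ)) : ℂ) * ∫ q : ℝ × ℝ, G ε q := by
      simp only [h2]
      rw [MeasureTheory.integral_const_mul]
    rw [h1] at h3
    have goal_eq : ((Real.sqrt ε : ℝ) : ℂ)
        = ((ε * ε : ℝ) : ℂ) * ((ε⁻¹ * (Real.sqrt ε)⁻¹ : ℝ) : ℂ) := by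
      have hssC : ((Real.sqrt ε : ℝ) : ℂ) * ((Real.sqrt ε : ℝ) : ℂ) = (ε : ℂ) := by
        exact_mod_cast hss
      have hεC : (ε : ℂ) ≠ 0 := by exact_mod_cast hε'
      have hsεC : ((Real.sqrt ε : ℝ) : ℂ) ≠ 0 := by exact_mod_cast hsε'
      push_cast
      field_simp
      linear_combination hssC
    rw [goal_eq, Complex.real_smul] at *
    calc ((ε * ε : ℝ) : ℂ) * ((ε⁻¹ * (Real.sqrt ε)⁻¹ : ℝ) : ℂ) * ∫ p : ℝ × ℝ, F ε p
        = ((ε * ε : ℝ) : ℂ) * (((ε⁻¹ * (Real.sqrt ε)⁻¹ : ℝ) : ℂ) * ∫ p : ℝ × ℝ, F ε p) := by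
          ring
      _ = ((ε * ε : ℝ) : ℂ) * ((((ε⁻¹ * ε⁻¹ : ℝ)) : ℂ) * ∫ q : ℝ × ℝ, G ε q) := by rw [h3]
      _ = ∫ q : ℝ × ℝ, G ε q := by
          have hεC : (ε : ℂ) ≠ 0 := by exact_mod_cast hε'
          push_cast
          field_simp
  -- Step B : dominated convergence
  obtain ⟨C, hC⟩ := hgc.exists_bound_of_continuous hgcont
  set Glim : ℝ × ℝ → ℂ := fun q => (((g 0) ^ 2 * F2 q : ℝ) : ℂ) with hGlim
  have hbound_int : Integrable (fun q : ℝ × ℝ => C ^ 2 * |F2 q|) :=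
    (hF2int.abs).const_mul _
  have hGmeas : ∀ ε : ℝ, AEStronglyMeasurable (G ε) volume := by
    intro ε
    apply Continuous.aestronglyMeasurable
    apply Continuous.mul
    · apply Complex.continuous_exp.comp
      apply Continuous.mul _ continuous_const
      apply Complex.continuous_ofReal.comp
      apply Continuous.add
      · exact (continuous_const.mul continuous_fst).mul continuous_const
      · exact (continuous_const.mul continuous_snd).mul continuous_const
    · exact Complex.continuous_ofReal.comp
        (((hgcont.comp (continuous_const.mul continuous_snd)).pow 2).mul hF2cont)
  have hGle : ∀ ε : ℝ, ∀ q : ℝ × ℝ, ‖G ε q‖ ≤ C ^ 2 * |F2 q| := by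
    intro ε q
    simp only [hG]
    rw [norm_mul]
    have h1 : ‖Complex.exp (((ε * q.1 * ξ + Real.sqrt ε * q.2 * η : ℝ) : ℂ) * (-Complex.I))‖
        = 1 := by
      rw [Complex.norm_exp]
      simp
    rw [h1, one_mul, Complex.norm_real, Real.norm_eq_abs, abs_mul]
    have h2 : |g (Real.sqrt ε * q.2) ^ 2| ≤ C ^ 2 := by
      rw [abs_pow, sq_abs]
      have := hC (Real.sqrt ε * q.2)
      rw [Real.norm_eq_abs] at this
      have h3 : |g (Real.sqrt ε * q.2)| ^ 2 ≤ C ^ 2 := by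
        apply pow_le_pow_left₀ (abs_nonneg _) this 2
      rw [← sq_abs]
      exact h3
    exact mul_le_mul_of_nonneg_right h2 (abs_nonneg _)
  have hGtendsto : ∀ q : ℝ × ℝ,
      Tendsto (fun ε : ℝ => G ε q) (𝓝[>] (0 : ℝ)) (𝓝 (Glim q)) := by
    intro q
    have hcont : Continuous (fun ε : ℝ => G ε q) := by
      apply Continuous.mul
      · apply Complex.continuous_exp.comp
        apply Continuous.mul _ continuous_const
        apply Complex.continuous_ofReal.comp
        apply Continuous.add
        · exact (continuous_id.mul continuous_const).mul continuous_const
        · exact ((Real.continuous_sqrt.mul continuous_const).mul continuous_const)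
      · exact Complex.continuous_ofReal.comp
          (((hgcont.comp (Real.continuous_sqrt.mul continuous_const)).pow 2).mul
            continuous_const)
    have h0 : G 0 q = Glim q := by
      simp [hG, hGlim]
    have := (hcont.tendsto 0).mono_left (nhdsWithin_le_nhds (s := Set.Ioi (0:ℝ)))
    rwa [h0] at this
  have hDCT : Tendsto (fun ε : ℝ => ∫ q : ℝ × ℝ, G ε q) (𝓝[>] (0 : ℝ))
      (𝓝 (∫ q : ℝ × ℝ, Glim q)) := by
    exact tendsto_integral_filter_of_dominated_convergence (fun q => C ^ 2 * |F2 q|)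
      (Filter.Eventually.of_forall hGmeas)
      (Filter.Eventually.of_forall fun ε => Filter.Eventually.of_forall (hGle ε))
      hbound_int
      (Filter.Eventually.of_forall fun q => hGtendsto q)
  have hlimval : (∫ q : ℝ × ℝ, Glim q) = (((g 0) ^ 2 / 2 : ℝ) : ℂ) := by
    simp only [hGlim]
    rw [show (fun q : ℝ × ℝ => (((g 0) ^ 2 * F2 q : ℝ) : ℂ)) =
        (fun q : ℝ × ℝ => ((RCLike.ofReal ((g 0) ^ 2 * F2 q)) : ℂ)) from rfl,
      integral_ofReal, MeasureTheory.integral_const_mul, crossInt]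
    show (((g 0) ^ 2 * (1 / 2) : ℝ) : ℂ) = (((g 0) ^ 2 / 2 : ℝ) : ℂ)
    push_cast
    ring
  rw [hlimval] at hDCT
  apply hDCT.congr'
  have hmem : ∀ᶠ ε : ℝ in 𝓝[>] (0 : ℝ), ε ∈ Set.Ioi (0 : ℝ) := self_mem_nhdsWithin
  exact hmem.mono fun ε hε => (stepA ε hε).symm
end

section
/- Let f, g, φ ∈ C_c^∞(ℝ) with ∫φ(x)dx = 1 and f ≡ 1 on a neighborhood of 0. Write φ_ε(x) = ε^{−1}φ(x/ε) and ĥ(ζ) = ∫ e^{−isζ} h(s) ds. Then there exists ε₀ > 0 such that for all 0 < ε < ε₀ and all ξ ∈ ℝ: ∫∫ e^{−ixξ} f(x) g(y) φ_ε(x − √ε·y) dx dy = φ̂(εξ) · ĝ(√ε·ξ). Consequently, for each fixed ξ ∈ ℝ this expression tends to ĝ(0) as ε → 0; in particular, if ĝ(0) ≠ 0 the Fourier transform of (f⊗g)·φ_ε(x − √ε y) is not rapidly decreasing in the directions (ξ, 0), uniformly in ε. -/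
open Filter Topology MeasureTheory

lemma hat_cont (φ : ℝ → ℝ) (hφ : Continuous φ) (hφc : HasCompactSupport φ) :
    Continuous (fun ζ : ℝ => ∫ s : ℝ, Complex.exp (-Complex.I * s * ζ) * (φ s : ℂ)) := by
  apply continuous_of_dominated (bound := fun s => |φ s|)
  · intro ζ
    exact (Continuous.aestronglyMeasurable (by fun_prop))
  · intro ζ
    filter_upwards with s
    have h1 : ‖Complex.exp (-Complex.I * s * ζ)‖ = 1 := by
      rw [Complex.norm_exp]
      simp [Complex.mul_re]
    rw [norm_mul, h1, one_mul, Complex.norm_real, Real.norm_eq_abs]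
  · exact (hφ.integrable_of_hasCompactSupport hφc).abs
  · filter_upwards with s
    fun_prop

/--
Let `f, g, φ ∈ C_c^∞(ℝ)` with `∫φ = 1` and `f ≡ 1` on a neighborhood
of `0`. With `φ_ε(x) = ε⁻¹φ(x/ε)` and `ĥ(ζ) = ∫ e^{−isζ}h(s)ds` there is `ε₀ > 0` such
that for all `0 < ε < ε₀` and all `ξ ∈ ℝ`:
`∫∫ e^{−ixξ} f(x) g(y) φ_ε(x − √ε·y) dx dy = φ̂(εξ)·ĝ(√ε·ξ)`.
Consequently, for each fixed `ξ` this expression tends to `ĝ(0)` as `ε → 0⁺`.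
-/
theorem stmt17 (f g φ : ℝ → ℝ)
    (hf : ContDiff ℝ (⊤ : ℕ∞) f) (hfc : HasCompactSupport f)
    (hg : ContDiff ℝ (⊤ : ℕ∞) g) (hgc : HasCompactSupport g)
    (hφ : ContDiff ℝ (⊤ : ℕ∞) φ) (hφc : HasCompactSupport φ) (hφ1 : (∫ x : ℝ, φ x) = 1)
    (hf1 : ∀ᶠ x in 𝓝 (0 : ℝ), f x = 1)
    (φhat ghat : ℝ → ℂ)
    (hφhat : ∀ ζ : ℝ, φhat ζ = ∫ s : ℝ, Complex.exp (-Complex.I * s * ζ) * (φ s : ℂ))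
    (hghat : ∀ ζ : ℝ, ghat ζ = ∫ s : ℝ, Complex.exp (-Complex.I * s * ζ) * (g s : ℂ)) :
    (∃ ε₀ : ℝ, 0 < ε₀ ∧ ∀ ε : ℝ, 0 < ε → ε < ε₀ → ∀ ξ : ℝ,
      (∫ p : ℝ × ℝ, Complex.exp (-Complex.I * p.1 * ξ) *
          ((f p.1 * g p.2 * (ε⁻¹ * φ ((p.1 - Real.sqrt ε * p.2) / ε)) : ℝ) : ℂ))
        = φhat (ε * ξ) * ghat (Real.sqrt ε * ξ)) ∧
    ∀ ξ : ℝ,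
      Tendsto (fun ε : ℝ =>
          ∫ p : ℝ × ℝ, Complex.exp (-Complex.I * p.1 * ξ) *
            ((f p.1 * g p.2 * (ε⁻¹ * φ ((p.1 - Real.sqrt ε * p.2) / ε)) : ℝ) : ℂ))
        (𝓝[>] (0 : ℝ)) (𝓝 (ghat 0)) := by
  have hgcont : Continuous g := hg.continuous
  have hφcont : Continuous φ := hφ.continuous
  -- radius of supports
  obtain ⟨R₁, hR₁⟩ := hgc.isCompact.isBounded.subset_closedBall 0
  obtain ⟨R₂, hR₂⟩ := hφc.isCompact.isBounded.subset_closedBall 0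
  set R : ℝ := max 1 (max R₁ R₂) with hRdef
  have hR0 : (0:ℝ) < R := lt_of_lt_of_le one_pos (le_max_left _ _)
  have hgR : ∀ y : ℝ, g y ≠ 0 → |y| ≤ R := by
    intro y hy
    have h := hR₁ (subset_tsupport g hy)
    simp only [Metric.mem_closedBall, Real.dist_eq, sub_zero] at h
    exact h.trans ((le_max_left R₁ R₂).trans (le_max_right _ _))
  have hφR : ∀ u : ℝ, φ u ≠ 0 → |u| ≤ R := by
    intro u hu
    have h := hR₂ (subset_tsupport φ hu)
    simp only [Metric.mem_closedBall, Real.dist_eq, sub_zero] at h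
    exact h.trans ((le_max_right R₁ R₂).trans (le_max_right _ _))
  -- neighborhood where f = 1
  obtain ⟨δ, hδ0, hδ⟩ := Metric.eventually_nhds_iff.1 hf1
  set ε₀ : ℝ := min 1 ((δ / (2 * R)) ^ 2) with hε₀def
  have hε₀pos : 0 < ε₀ :=
    lt_min one_pos (pow_pos (div_pos hδ0 (by linarith)) 2)
  -- key identity
  have key : ∀ ε : ℝ, 0 < ε → ε < ε₀ → ∀ ξ : ℝ,
      (∫ p : ℝ × ℝ, Complex.exp (-Complex.I * p.1 * ξ) *
          ((f p.1 * g p.2 * (ε⁻¹ * φ ((p.1 - Real.sqrt ε * p.2) / ε)) : ℝ) : ℂ))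
        = φhat (ε * ξ) * ghat (Real.sqrt ε * ξ) := by
    intro ε hε hεlt ξ
    have hεne : ε ≠ 0 := ne_of_gt hε
    have hεcne : (ε:ℂ) ≠ 0 := by exact_mod_cast hεne
    have hε1 : ε < 1 := lt_of_lt_of_le hεlt (min_le_left _ _)
    have hsq : Real.sqrt ε < δ / (2 * R) := by
      have h2 : ε < (δ / (2 * R)) ^ 2 := lt_of_lt_of_le hεlt (min_le_right _ _)
      have := Real.sqrt_lt_sqrt (le_of_lt hε) h2
      rwa [Real.sqrt_sq (le_of_lt (div_pos hδ0 (by linarith)))] at this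
    have hεsq : ε ≤ Real.sqrt ε := by
      nlinarith [Real.sq_sqrt (le_of_lt hε), Real.sqrt_nonneg ε,
        Real.sqrt_lt_sqrt (le_of_lt hε) hε1, Real.sqrt_one]
    -- the bound for x
    have hxb : ∀ x y : ℝ, g y ≠ 0 → φ ((x - Real.sqrt ε * y) / ε) ≠ 0 →
        |x| ≤ ε * R + Real.sqrt ε * R := by
      intro x y hy hu
      have h1 : |y| ≤ R := hgR y hy
      have h2 : |(x - Real.sqrt ε * y) / ε| ≤ R := hφR _ hu
      have h3 : |x - Real.sqrt ε * y| ≤ ε * R := by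
        rw [abs_div, abs_of_pos hε, div_le_iff₀ hε] at h2
        linarith [h2]
      have h4 : |Real.sqrt ε * y| ≤ Real.sqrt ε * R := by
        rw [abs_mul, abs_of_nonneg (Real.sqrt_nonneg ε)]
        exact mul_le_mul_of_nonneg_left h1 (Real.sqrt_nonneg ε)
      calc |x| = |(x - Real.sqrt ε * y) + Real.sqrt ε * y| := by ring_nf
        _ ≤ |x - Real.sqrt ε * y| + |Real.sqrt ε * y| := abs_add_le _ _
        _ ≤ ε * R + Real.sqrt ε * R := add_le_add h3 h4
    have hxbound : ∀ x y : ℝ, g y ≠ 0 → φ ((x - Real.sqrt ε * y) / ε) ≠ 0 → |x| < δ := by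
      intro x y hy hu
      have h5 := hxb x y hy hu
      have h6 : ε * R ≤ Real.sqrt ε * R := mul_le_mul_of_nonneg_right hεsq (le_of_lt hR0)
      have h7 : Real.sqrt ε * (2 * R) < δ := by
        rw [lt_div_iff₀ (by linarith : (0:ℝ) < 2 * R)] at hsq
        linarith
      linarith
    -- remove f
    have hremove : ∀ p : ℝ × ℝ,
        Complex.exp (-Complex.I * p.1 * ξ) *
          ((f p.1 * g p.2 * (ε⁻¹ * φ ((p.1 - Real.sqrt ε * p.2) / ε)) : ℝ) : ℂ)
        = Complex.exp (-Complex.I * p.1 * ξ) *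
          ((g p.2 * (ε⁻¹ * φ ((p.1 - Real.sqrt ε * p.2) / ε)) : ℝ) : ℂ) := by
      rintro ⟨x, y⟩
      simp only
      by_cases hy : g y = 0
      · rw [hy]; ring_nf
      by_cases hu : φ ((x - Real.sqrt ε * y) / ε) = 0
      · rw [hu]; ring_nf
      · rw [hδ (by simpa [Real.dist_eq] using hxbound x y hy hu), one_mul]
    rw [integral_congr_ae (Filter.Eventually.of_forall hremove)]
    -- integrability of the reduced integrand
    set F : ℝ × ℝ → ℂ := fun p => Complex.exp (-Complex.I * p.1 * ξ) *
          ((g p.2 * (ε⁻¹ * φ ((p.1 - Real.sqrt ε * p.2) / ε)) : ℝ) : ℂ) with hFdef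
    have hFcont : Continuous F := by
      apply Continuous.mul (by fun_prop)
      fun_prop
    have hFsupp : HasCompactSupport F := by
      apply HasCompactSupport.intro
        ((isCompact_closedBall (0:ℝ) (ε * R + Real.sqrt ε * R)).prod
          (isCompact_closedBall (0:ℝ) R))
      rintro ⟨x, y⟩ hp
      by_contra hF
      have hy : g y ≠ 0 := by
        intro h; apply hF; simp [hFdef, h]
      have hu : φ ((x - Real.sqrt ε * y) / ε) ≠ 0 := by
        intro h; apply hF; simp [hFdef, h]
      exact hp ⟨by simpa [Real.dist_eq] using hxb x y hy hu,
        by simpa [Real.dist_eq] using hgR y hy⟩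
    have hFint : Integrable F := hFcont.integrable_of_hasCompactSupport hFsupp
    rw [Measure.volume_eq_prod] at hFint ⊢
    rw [MeasureTheory.integral_prod_symm F hFint]
    -- inner integral computation
    have inner : ∀ y : ℝ,
        (∫ x : ℝ, F (x, y))
          = (g y : ℂ) * (Complex.exp (-Complex.I * ((Real.sqrt ε * y : ℝ) : ℂ) * ξ)
              * φhat (ε * ξ)) := by
      intro y
      set T : ℝ → ℂ := fun t => Complex.exp (-Complex.I * ((t : ℂ) +
          ((Real.sqrt ε * y : ℝ) : ℂ)) * ξ) * ((ε⁻¹ * φ (t / ε) : ℝ) : ℂ) with hTdef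
      have key1 : ∀ x : ℝ, F (x, y) = (g y : ℂ) * T (x - Real.sqrt ε * y) := by
        intro x
        simp only [hFdef, hTdef]
        have e : ((x - Real.sqrt ε * y : ℝ) : ℂ) + ((Real.sqrt ε * y : ℝ) : ℂ) = (x : ℂ) := by
          push_cast; ring
        rw [e]
        push_cast
        ring
      rw [integral_congr_ae (Filter.Eventually.of_forall key1), integral_const_mul]
      congr 1
      have hsub : (∫ x : ℝ, T (x - Real.sqrt ε * y)) = ∫ t : ℝ, T t :=
        integral_sub_right_eq_self T (Real.sqrt ε * y)
      rw [hsub]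
      set G : ℝ → ℂ := fun u => Complex.exp (-Complex.I * (u : ℂ) * ((ε * ξ : ℝ) : ℂ)) *
          ((φ u : ℝ) : ℂ) * ((ε⁻¹ : ℝ) : ℂ) with hGdef
      have key2 : ∀ t : ℝ, T t =
          Complex.exp (-Complex.I * ((Real.sqrt ε * y : ℝ) : ℂ) * ξ) * G (t / ε) := by
        intro t
        simp only [hTdef, hGdef]
        have e2 : -Complex.I * ((t / ε : ℝ) : ℂ) * ((ε * ξ : ℝ) : ℂ)
            = -Complex.I * (t : ℂ) * (ξ : ℂ) := by
          push_cast
          field_simp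
        have e3 : -Complex.I * ((t : ℂ) + ((Real.sqrt ε * y : ℝ) : ℂ)) * (ξ : ℂ)
            = (-Complex.I * ((Real.sqrt ε * y : ℝ) : ℂ) * ξ) + (-Complex.I * (t : ℂ) * ξ) := by
          ring
        rw [e3, Complex.exp_add, e2]
        push_cast
        ring
      rw [integral_congr_ae (Filter.Eventually.of_forall key2), integral_const_mul]
      congr 1
      rw [Measure.integral_comp_div G ε, abs_of_pos hε, hφhat]
      simp only [hGdef]
      rw [integral_mul_const, Complex.real_smul]
      push_cast
      rw [mul_comm (∫ (a : ℝ), Complex.exp (-Complex.I * ↑a * (↑ε * ↑ξ)) * ↑(φ a)) ((ε:ℂ))⁻¹,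
        ← mul_assoc, mul_inv_cancel₀ hεcne, one_mul]
    rw [integral_congr_ae (Filter.Eventually.of_forall inner)]
    have outer : ∀ y : ℝ, (g y : ℂ) *
        (Complex.exp (-Complex.I * ((Real.sqrt ε * y : ℝ) : ℂ) * ξ) * φhat (ε * ξ))
        = φhat (ε * ξ) *
          (Complex.exp (-Complex.I * (y : ℂ) * ((Real.sqrt ε * ξ : ℝ) : ℂ)) * (g y : ℂ)) := by
      intro y
      have e4 : -Complex.I * ((Real.sqrt ε * y : ℝ) : ℂ) * (ξ : ℂ)
          = -Complex.I * (y : ℂ) * ((Real.sqrt ε * ξ : ℝ) : ℂ) := by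
        push_cast; ring
      rw [e4]; ring
    rw [integral_congr_ae (Filter.Eventually.of_forall outer), integral_const_mul, hghat]
  refine ⟨⟨ε₀, hε₀pos, key⟩, ?_⟩
  -- the limit
  intro ξ
  have hφhat_cont : Continuous φhat := by
    have := hat_cont φ hφcont hφc
    convert this using 1
    funext ζ; exact hφhat ζ
  have hghat_cont : Continuous ghat := by
    have := hat_cont g hgcont hgc
    convert this using 1
    funext ζ; exact hghat ζ
  have hφhat0 : φhat 0 = 1 := by
    rw [hφhat]
    simp only [Complex.ofReal_zero, mul_zero, Complex.exp_zero, one_mul]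
    have hint : Integrable φ (volume : Measure ℝ) :=
      hφcont.integrable_of_hasCompactSupport hφc
    have h' : ∫ s : ℝ, ((φ s : ℝ) : ℂ) = ((∫ s : ℝ, φ s : ℝ) : ℂ) :=
      Complex.ofRealCLM.integral_comp_comm hint
    rw [h', hφ1, Complex.ofReal_one]
  have htarget : Tendsto (fun ε : ℝ => φhat (ε * ξ) * ghat (Real.sqrt ε * ξ))
      (𝓝[>] (0:ℝ)) (𝓝 (ghat 0)) := by
    have h1 : Tendsto (fun ε : ℝ => ε * ξ) (𝓝[>] (0:ℝ)) (𝓝 (0:ℝ)) := by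
      have : Tendsto (fun ε : ℝ => ε * ξ) (𝓝 (0:ℝ)) (𝓝 (0 * ξ)) :=
        (continuous_mul_right ξ).tendsto 0
      rw [zero_mul] at this
      exact this.mono_left nhdsWithin_le_nhds
    have h2 : Tendsto (fun ε : ℝ => Real.sqrt ε * ξ) (𝓝[>] (0:ℝ)) (𝓝 (0:ℝ)) := by
      have : Tendsto (fun ε : ℝ => Real.sqrt ε * ξ) (𝓝 (0:ℝ)) (𝓝 (Real.sqrt 0 * ξ)) :=
        ((continuous_mul_right ξ).comp Real.continuous_sqrt).tendsto 0
      rw [Real.sqrt_zero, zero_mul] at this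
      exact this.mono_left nhdsWithin_le_nhds
    have := ((hφhat_cont.tendsto 0).comp h1).mul ((hghat_cont.tendsto 0).comp h2)
    rwa [hφhat0, one_mul] at this
  apply htarget.congr'
  filter_upwards [Ioo_mem_nhdsGT_of_mem (by constructor <;> [rfl; exact hε₀pos] :
      (0:ℝ) ∈ Set.Ico 0 ε₀)] with ε hε
  exact (key ε hε.1 hε.2 ξ).symm
end
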